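/- arXiv:2404.11464 — 3 statements merged into one kernel-verified Lean document; each statement's English description precedes it below -/
import Mathlib

section
/- Let Y ⊂ ℝ^m be a finite nonempty set, h : Y → (0,∞), and for θ ∈ ℝ^m let f_θ(y) := h(y)·exp(⟨θ, y⟩ − ψ(θ)) with ψ(θ) := log(Σ_{y∈Y} h(y)·e^{⟨θ,y⟩}); write μ(θ) := E_θ[Y]. Fix θ ∈ ℝ^m and suppose there are constants U₁ > 0 and U₂ > 0 such that |y_t| ≤ U₁ and |y_t − μ_t(θ)| ≤ U₂ for every y ∈ Y and every t ∈ {1,…,m}. Then for all i, j, h ∈ {1,…,m}: |∂/∂θ_h Cov_θ(Y_i, Y_j)| ≤ 2·U₁·U₂·(U₂ + 2). -/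
open Finset

/-- **Bound on the derivative of a covariance in a natural exponential family
with finite support `Y ⊂ ℝ^m`.**  If `|y_t| ≤ U₁` and `|y_t − μ_t(θ)| ≤ U₂`
for every `y ∈ Y` and every coordinate `t`, then for all coordinates
`i, j, k`: `|∂/∂θ_k Cov_θ(Y_i, Y_j)| ≤ 2·U₁·U₂·(U₂ + 2)`. -/
theorem nef_cov_deriv_bound {m : ℕ}
    (Y : Finset (Fin m → ℝ)) (hY : Y.Nonempty)
    (h : (Fin m → ℝ) → ℝ) (hpos : ∀ y ∈ Y, 0 < h y)
    (ψ : (Fin m → ℝ) → ℝ)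
    (hψ : ∀ θ, ψ θ = Real.log (∑ y ∈ Y, h y * Real.exp (∑ i, θ i * y i)))
    (f : (Fin m → ℝ) → (Fin m → ℝ) → ℝ)
    (hf : ∀ θ y, f θ y = h y * Real.exp ((∑ i, θ i * y i) - ψ θ))
    (μ : (Fin m → ℝ) → Fin m → ℝ)
    (hμ : ∀ θ t, μ θ t = ∑ y ∈ Y, f θ y * y t)
    (Cov : (Fin m → ℝ) → Fin m → Fin m → ℝ)
    (hCov : ∀ θ i j,
      Cov θ i j = (∑ y ∈ Y, f θ y * (y i * y j)) - μ θ i * μ θ j)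
    (θ : Fin m → ℝ) (U₁ U₂ : ℝ) (hU₁ : 0 < U₁) (hU₂ : 0 < U₂)
    (hb₁ : ∀ y ∈ Y, ∀ t, |y t| ≤ U₁)
    (hb₂ : ∀ y ∈ Y, ∀ t, |y t - μ θ t| ≤ U₂)
    (i j k : Fin m) :
    |deriv (fun t => Cov (Function.update θ k t) i j) (θ k)|
      ≤ 2 * U₁ * U₂ * (U₂ + 2) := by
  classical
  set t₀ : ℝ := θ k with ht₀
  -- the "constant part" of the inner product
  set c : (Fin m → ℝ) → ℝ := fun y => (∑ i, θ i * y i) - θ k * y k with hc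
  have hsum : ∀ (t : ℝ) (y : Fin m → ℝ),
      (∑ i, Function.update θ k t i * y i) = t * y k + c y := by
    intro t y
    have h1 : (∑ i ∈ Finset.univ.erase k, Function.update θ k t i * y i)
        + Function.update θ k t k * y k
        = ∑ i, Function.update θ k t i * y i :=
      Finset.sum_erase_add _ _ (Finset.mem_univ k)
    have h2 : (∑ i ∈ Finset.univ.erase k, θ i * y i) + θ k * y k
        = ∑ i, θ i * y i :=
      Finset.sum_erase_add _ _ (Finset.mem_univ k)
    have h3 : (∑ i ∈ Finset.univ.erase k, Function.update θ k t i * y i)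
        = ∑ i ∈ Finset.univ.erase k, θ i * y i := by
      refine Finset.sum_congr rfl fun x hx => ?_
      rw [Function.update_of_ne (Finset.ne_of_mem_erase hx)]
    have h4 : Function.update θ k t k = t := Function.update_self k t θ
    simp only [hc]
    rw [← h1, h3, h4]
    linarith [h2]
  -- weights and the partition function
  set w : (Fin m → ℝ) → ℝ → ℝ := fun y t => h y * Real.exp (t * y k + c y)
    with hwdef
  set Z : ℝ → ℝ := fun t => ∑ y ∈ Y, w y t with hZdef
  have hwpos : ∀ y ∈ Y, ∀ t, 0 < w y t := fun y hy t =>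
    mul_pos (hpos y hy) (Real.exp_pos _)
  have hZpos : ∀ t, 0 < Z t := fun t =>
    Finset.sum_pos (fun y hy => hwpos y hy t) hY
  -- f in terms of w and Z
  have hfw : ∀ (t : ℝ), ∀ y ∈ Y, f (Function.update θ k t) y = w y t / Z t := by
    intro t y hy
    have hψt : ψ (Function.update θ k t) = Real.log (Z t) := by
      rw [hψ]
      congr 1
      refine Finset.sum_congr rfl fun z _ => ?_
      rw [hsum t z]
    rw [hf, hψt, hsum t y, Real.exp_sub, Real.exp_log (hZpos t)]
    simp only [hwdef]
    ring
  -- derivative of each weight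
  have hwderiv : ∀ (y : Fin m → ℝ) (t : ℝ),
      HasDerivAt (w y) (w y t * y k) t := by
    intro y t
    have h1 : HasDerivAt (fun s : ℝ => s * y k + c y) (y k) t := by
      simpa using ((hasDerivAt_id t).mul_const (y k)).add_const (c y)
    have h2 := (h1.exp).const_mul (h y)
    have e : w y t * y k = h y * (Real.exp (t * y k + c y) * y k) := by
      simp only [hwdef]
      ring
    rw [e]
    exact h2
  -- derivative of weighted sums
  have hGderiv : ∀ (a : (Fin m → ℝ) → ℝ) (t : ℝ),
      HasDerivAt (fun s => ∑ y ∈ Y, w y s * a y)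
        (∑ y ∈ Y, w y t * y k * a y) t := by
    intro a t
    refine HasDerivAt.fun_sum fun y _ => ?_
    simpa [mul_comm, mul_assoc, mul_left_comm] using (hwderiv y t).mul_const (a y)
  have hZderiv : ∀ t : ℝ, HasDerivAt Z (∑ y ∈ Y, w y t * y k) t := by
    intro t
    have := hGderiv (fun _ => 1) t
    simpa using this
  -- the covariance as a function of t
  have hg : (fun t => Cov (Function.update θ k t) i j)
      = fun t => (∑ y ∈ Y, w y t * (y i * y j)) / Z t
          - ((∑ y ∈ Y, w y t * y i) / Z t) * ((∑ y ∈ Y, w y t * y j) / Z t) := by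
    funext t
    have key : ∀ a : (Fin m → ℝ) → ℝ,
        (∑ y ∈ Y, f (Function.update θ k t) y * a y)
          = (∑ y ∈ Y, w y t * a y) / Z t := by
      intro a
      rw [Finset.sum_div]
      refine Finset.sum_congr rfl fun y hy => ?_
      rw [hfw t y hy, div_mul_eq_mul_div]
    rw [hCov, hμ, hμ, key (fun y => y i * y j), key (fun y => y i), key (fun y => y j)]
  -- shorthand at the point t₀
  set q : ℝ := Z t₀ with hq
  have hqpos : 0 < q := hZpos t₀
  have hqne : q ≠ 0 := ne_of_gt hqpos
  set p : (Fin m → ℝ) → ℝ := fun y => f θ y with hp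
  have hpw : ∀ y ∈ Y, p y = w y t₀ / q := by
    intro y hy
    have := hfw t₀ y hy
    rwa [ht₀, Function.update_eq_self] at this
  have hpnn : ∀ y ∈ Y, 0 ≤ p y := by
    intro y hy
    rw [hpw y hy]
    exact le_of_lt (div_pos (hwpos y hy t₀) hqpos)
  have hpsum : ∑ y ∈ Y, p y = 1 := by
    rw [Finset.sum_congr rfl hpw, ← Finset.sum_div]
    exact div_self hqne
  -- weighted sums at t₀ in terms of p
  have hwp : ∀ a : (Fin m → ℝ) → ℝ,
      (∑ y ∈ Y, w y t₀ * a y) = q * ∑ y ∈ Y, p y * a y := by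
    intro a
    rw [Finset.mul_sum]
    refine Finset.sum_congr rfl fun y hy => ?_
    rw [hpw y hy]
    field_simp
  set Ei : ℝ := μ θ i with hEi
  set Ej : ℝ := μ θ j with hEj
  set Ek : ℝ := μ θ k with hEk
  have hEi' : Ei = ∑ y ∈ Y, p y * y i := hμ θ i
  have hEj' : Ej = ∑ y ∈ Y, p y * y j := hμ θ j
  have hEk' : Ek = ∑ y ∈ Y, p y * y k := hμ θ k
  set Eij : ℝ := ∑ y ∈ Y, p y * (y i * y j) with hEij
  set Eik : ℝ := ∑ y ∈ Y, p y * (y i * y k) with hEik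
  set Ejk : ℝ := ∑ y ∈ Y, p y * (y j * y k) with hEjk
  set Eijk : ℝ := ∑ y ∈ Y, p y * (y i * y j * y k) with hEijk
  -- compute the derivative
  set D : ℝ := Eijk - Eij * Ek - (Eik - Ei * Ek) * Ej - Ei * (Ejk - Ej * Ek)
    with hD
  have hderiv : deriv (fun t => Cov (Function.update θ k t) i j) t₀ = D := by
    rw [hg]
    have H1 := (hGderiv (fun y => y i * y j) t₀).fun_div (hZderiv t₀) hqne
    have H2 := ((hGderiv (fun y => y i) t₀).fun_div (hZderiv t₀) hqne).fun_mul
      ((hGderiv (fun y => y j) t₀).fun_div (hZderiv t₀) hqne)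
    have H := (H1.fun_sub H2).deriv
    rw [H]
    have e0 : (∑ y ∈ Y, w y t₀ * y k) = q * Ek := by
      have := hwp (fun y => y k); rw [this, hEk']
    have e1 : (∑ y ∈ Y, w y t₀ * (y i * y j)) = q * Eij := by
      rw [hwp (fun y => y i * y j)]
    have e2 : (∑ y ∈ Y, w y t₀ * y i) = q * Ei := by
      have := hwp (fun y => y i); rw [this, hEi']
    have e3 : (∑ y ∈ Y, w y t₀ * y j) = q * Ej := by
      have := hwp (fun y => y j); rw [this, hEj']
    have e4 : (∑ y ∈ Y, w y t₀ * y k * (y i * y j)) = q * Eijk := by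
      have : (∑ y ∈ Y, w y t₀ * y k * (y i * y j))
          = ∑ y ∈ Y, w y t₀ * (y i * y j * y k) := by
        refine Finset.sum_congr rfl fun y _ => ?_; ring
      rw [this, hwp (fun y => y i * y j * y k)]
    have e5 : (∑ y ∈ Y, w y t₀ * y k * y i) = q * Eik := by
      have : (∑ y ∈ Y, w y t₀ * y k * y i)
          = ∑ y ∈ Y, w y t₀ * (y i * y k) := by
        refine Finset.sum_congr rfl fun y _ => ?_; ring
      rw [this, hwp (fun y => y i * y k)]
    have e6 : (∑ y ∈ Y, w y t₀ * y k * y j) = q * Ejk := by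
      have : (∑ y ∈ Y, w y t₀ * y k * y j)
          = ∑ y ∈ Y, w y t₀ * (y j * y k) := by
        refine Finset.sum_congr rfl fun y _ => ?_; ring
      rw [this, hwp (fun y => y j * y k)]
    rw [e0, e1, e2, e3, e4, e5, e6, hD, ← hq]
    field_simp
    ring
  -- the derivative is the third central moment
  have hcentral : D = ∑ y ∈ Y, p y * ((y i - Ei) * (y j - Ej) * (y k - Ek)) := by
    have expand : ∀ y : Fin m → ℝ,
        p y * ((y i - Ei) * (y j - Ej) * (y k - Ek))
          = p y * (y i * y j * y k) - Ei * (p y * (y j * y k))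
            - Ej * (p y * (y i * y k)) - Ek * (p y * (y i * y j))
            + Ei * Ej * (p y * y k) + Ei * Ek * (p y * y j)
            + Ej * Ek * (p y * y i) - Ei * Ej * Ek * p y := by
      intro y; ring
    rw [Finset.sum_congr rfl fun y _ => expand y]
    simp only [Finset.sum_add_distrib, Finset.sum_sub_distrib, ← Finset.mul_sum]
    rw [← hEijk, ← hEjk, ← hEik, ← hEij, ← hEk', ← hEj', ← hEi', hpsum, hD]
    ring
  -- bounds
  have hμb : ∀ t : Fin m, |μ θ t| ≤ U₁ := by
    intro t
    rw [hμ]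
    calc |∑ y ∈ Y, f θ y * y t| ≤ ∑ y ∈ Y, |f θ y * y t| :=
          Finset.abs_sum_le_sum_abs _ _
      _ ≤ ∑ y ∈ Y, p y * U₁ := by
          refine Finset.sum_le_sum fun y hy => ?_
          rw [abs_mul, abs_of_nonneg (hpnn y hy)]
          exact mul_le_mul_of_nonneg_left (hb₁ y hy t) (hpnn y hy)
      _ = U₁ := by rw [← Finset.sum_mul, hpsum, one_mul]
  have hbound : |D| ≤ 2 * U₁ * U₂ * U₂ := by
    rw [hcentral]
    calc |∑ y ∈ Y, p y * ((y i - Ei) * (y j - Ej) * (y k - Ek))|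
        ≤ ∑ y ∈ Y, |p y * ((y i - Ei) * (y j - Ej) * (y k - Ek))| :=
          Finset.abs_sum_le_sum_abs _ _
      _ ≤ ∑ y ∈ Y, p y * (2 * U₁ * U₂ * U₂) := by
          refine Finset.sum_le_sum fun y hy => ?_
          rw [abs_mul, abs_of_nonneg (hpnn y hy), abs_mul, abs_mul]
          have b1 : |y i - Ei| ≤ 2 * U₁ := by
            calc |y i - Ei| ≤ |y i| + |Ei| := abs_sub _ _
              _ ≤ U₁ + U₁ := add_le_add (hb₁ y hy i) (hμb i)
              _ = 2 * U₁ := by ring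
          have b2 : |y j - Ej| ≤ U₂ := hb₂ y hy j
          have b3 : |y k - Ek| ≤ U₂ := hb₂ y hy k
          have habs : |y i - Ei| * |y j - Ej| * |y k - Ek| ≤ 2 * U₁ * U₂ * U₂ := by
            have h12 : |y i - Ei| * |y j - Ej| ≤ (2 * U₁) * U₂ :=
              mul_le_mul b1 b2 (abs_nonneg _) (by positivity)
            exact mul_le_mul h12 b3 (abs_nonneg _) (by positivity)
          exact mul_le_mul_of_nonneg_left habs (hpnn y hy)
      _ = 2 * U₁ * U₂ * U₂ := by rw [← Finset.sum_mul, hpsum, one_mul]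
  rw [ht₀] at hderiv
  rw [hderiv]
  have : 2 * U₁ * U₂ * U₂ ≤ 2 * U₁ * U₂ * (U₂ + 2) := by nlinarith
  linarith [hbound, abs_le.mp (le_refl |D|)]
end

section
/- Consider an exponential-family local dependence random graph model satisfying Assumption 1 with constants C_W, C_B > 0. Then for every θ ∈ ℝ^{p+q}, every x ∈ X, and all index triples (i, j, h): if (i, j, h) ∈ {1,…,p}³ then |∂³ℓ(θ, x)/∂θ_i∂θ_j∂θ_h| ≤ A_max⁶·C_W²·(C_W + 2)·K; if (i, j, h) ∈ {p+1,…,p+q}³ then |∂³ℓ(θ, x)/∂θ_i∂θ_j∂θ_h| ≤ 2·A_max⁶·C_B²·(C_B + 2)·C(K,2); and if the triple (i, j, h) contains both an index in {1,…,p} and an index in {p+1,…,p+q}, then ∂³ℓ(θ, x)/∂θ_i∂θ_j∂θ_h = 0. -/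
open Finset MeasureTheory ProbabilityTheory

/-! ## Setup: exponential-family local dependence random graph models

Fix integers `N ≥ 3`, `K ≥ 1`, `p ≥ 1`, `q ≥ 1` and a partition of `{1,…,N}`
into `K` nonempty blocks `A_1, …, A_K`.  Within-block subgraphs live in
`{0,1}^{C(|A_k|,2)}` and between-block subgraphs in `{0,1}^{|A_k|·|A_l|}`.
Given block sufficient statistics and reference functions, the model is the
exponential family `P_θ(X = x) = h(x)·exp(⟨θ, s(x)⟩ − ψ(θ))` on the finite
graph space, with `θ = (θ_W, θ_B) ∈ ℝ^{p+q}`. -/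


section General
variable {X : Type*} [Fintype X] {n : ℕ}

noncomputable def gG (w : X → ℝ) (s : X → Fin n → ℝ) (g : X → ℝ) (θ : Fin n → ℝ) : ℝ :=
  ∑ x, w x * g x * Real.exp (∑ i, θ i * s x i)
noncomputable def gE (w : X → ℝ) (s : X → Fin n → ℝ) (f : X → ℝ) (θ : Fin n → ℝ) : ℝ :=
  gG w s f θ / gG w s (fun _ => 1) θ
noncomputable def gCov (w : X → ℝ) (s : X → Fin n → ℝ) (f g : X → ℝ) (θ : Fin n → ℝ) : ℝ :=
  gE w s (fun x => f x * g x) θ - gE w s f θ * gE w s g θ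
noncomputable def gpsi (w : X → ℝ) (s : X → Fin n → ℝ) (θ : Fin n → ℝ) : ℝ :=
  Real.log (gG w s (fun _ => 1) θ)
noncomputable def gKappa (w : X → ℝ) (s : X → Fin n → ℝ) (i j k : Fin n) (θ : Fin n → ℝ) : ℝ :=
  gCov w s (fun x => s x k * s x j) (fun x => s x i) θ
    - gCov w s (fun x => s x k) (fun x => s x i) θ * gE w s (fun x => s x j) θ
    - gE w s (fun x => s x k) θ * gCov w s (fun x => s x j) (fun x => s x i) θ

lemma sum_update (θ : Fin n → ℝ) (k : Fin n) (t : ℝ) (v : Fin n → ℝ) :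
    (∑ i, Function.update θ k t i * v i) = (∑ i, θ i * v i) + (t - θ k) * v k := by
  have h : ∀ i ∈ (univ : Finset (Fin n)),
      Function.update θ k t i * v i
        = θ i * v i + (if i = k then (t - θ k) * v k else 0) := by
    intro i _
    by_cases hik : i = k
    · subst hik; simp [Function.update_self]; ring
    · simp [Function.update_of_ne hik, hik]
  rw [Finset.sum_congr rfl h, Finset.sum_add_distrib]
  simp

lemma gG_pos (w : X → ℝ) (s : X → Fin n → ℝ) (hw : ∀ x, 0 ≤ w x) (hne : ∃ x, w x ≠ 0)
    (θ : Fin n → ℝ) : 0 < gG w s (fun _ => 1) θ := by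
  obtain ⟨x0, hx0⟩ := hne
  refine Finset.sum_pos' (fun x _ => ?_) ⟨x0, Finset.mem_univ _, ?_⟩
  · have := hw x; positivity
  have : 0 < w x0 := lt_of_le_of_ne (hw x0) (Ne.symm hx0)
  positivity

lemma hasDerivAt_gG (w : X → ℝ) (s : X → Fin n → ℝ) (g : X → ℝ) (θ : Fin n → ℝ) (k : Fin n) :
    HasDerivAt (fun t => gG w s g (Function.update θ k t))
      (gG w s (fun x => g x * s x k) θ) (θ k) := by
  unfold gG
  refine HasDerivAt.fun_sum (fun x _ => ?_)
  have h1 : HasDerivAt (fun t : ℝ => (∑ i, θ i * s x i) + (t - θ k) * s x k)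
      (s x k) (θ k) := by
    simpa using (((hasDerivAt_id (θ k)).sub_const (θ k)).mul_const (s x k)).const_add
      (∑ i, θ i * s x i)
  have h2 := (h1.exp).const_mul (w x * g x)
  have hfun : (fun t => w x * g x * Real.exp (∑ i, Function.update θ k t i * s x i))
      = fun t => w x * g x * Real.exp ((∑ i, θ i * s x i) + (t - θ k) * s x k) := by
    funext t; rw [sum_update]
  rw [hfun]
  refine h2.congr_deriv (Eq.symm ?_)
  simp
  ring

variable {w : X → ℝ} {s : X → Fin n → ℝ}

lemma hasDerivAt_gE (hw : ∀ x, 0 ≤ w x) (hne : ∃ x, w x ≠ 0) (f : X → ℝ)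
    (θ : Fin n → ℝ) (j : Fin n) :
    HasDerivAt (fun t => gE w s f (Function.update θ j t))
      (gCov w s f (fun x => s x j) θ) (θ j) := by
  have hZ : ∀ θ', (0:ℝ) < gG w s (fun _ => 1) θ' := gG_pos w s hw hne
  have h1 := hasDerivAt_gG w s f θ j
  have h2 := hasDerivAt_gG w s (fun _ => 1) θ j
  have hne' : gG w s (fun _ => 1) (Function.update θ j (θ j)) ≠ 0 := (hZ _).ne'
  have h3 := h1.div h2 hne'
  have : (fun t => gE w s f (Function.update θ j t))
      = fun t => gG w s f (Function.update θ j t) / gG w s (fun _ => 1) (Function.update θ j t) := rfl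
  rw [this]
  refine h3.congr_deriv (Eq.symm ?_)
  rw [Function.update_eq_self]
  unfold gCov gE
  have hz := (hZ θ).ne'
  field_simp

lemma hasDerivAt_gpsi (hw : ∀ x, 0 ≤ w x) (hne : ∃ x, w x ≠ 0)
    (θ : Fin n → ℝ) (k : Fin n) :
    HasDerivAt (fun t => gpsi w s (Function.update θ k t))
      (gE w s (fun x => s x k) θ) (θ k) := by
  have hZ : ∀ θ', (0:ℝ) < gG w s (fun _ => 1) θ' := gG_pos w s hw hne
  have h2 := hasDerivAt_gG w s (fun _ => 1) θ k
  have hne' : gG w s (fun _ => 1) (Function.update θ k (θ k)) ≠ 0 := (hZ _).ne'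
  have h3 := h2.log hne'
  have : (fun t => gpsi w s (Function.update θ k t))
      = fun t => Real.log (gG w s (fun _ => 1) (Function.update θ k t)) := rfl
  rw [this]
  convert h3 using 1
  rw [Function.update_eq_self]
  unfold gE gG
  simp only [one_mul, mul_one]

lemma hasDerivAt_gCov (hw : ∀ x, 0 ≤ w x) (hne : ∃ x, w x ≠ 0) (f g : X → ℝ)
    (θ : Fin n → ℝ) (i : Fin n) :
    HasDerivAt (fun t => gCov w s f g (Function.update θ i t))
      (gCov w s (fun x => f x * g x) (fun x => s x i) θ
        - gCov w s f (fun x => s x i) θ * gE w s g θ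
        - gE w s f θ * gCov w s g (fun x => s x i) θ) (θ i) := by
  have h1 := hasDerivAt_gE (s := s) hw hne (fun x => f x * g x) θ i
  have h2 := hasDerivAt_gE (s := s) hw hne f θ i
  have h3 := hasDerivAt_gE (s := s) hw hne g θ i
  have h4 := h1.sub (h2.mul h3)
  have : (fun t => gCov w s f g (Function.update θ i t))
      = fun t => gE w s (fun x => f x * g x) (Function.update θ i t)
          - gE w s f (Function.update θ i t) * gE w s g (Function.update θ i t) := rfl
  rw [this]
  refine h4.congr_deriv (Eq.symm ?_)
  rw [Function.update_eq_self]
  ring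

lemma gE_zero {f : X → ℝ} (h : ∀ x, f x = 0) (θ : Fin n → ℝ) : gE w s f θ = 0 := by
  unfold gE gG
  rw [Finset.sum_eq_zero (fun x _ => by rw [h]; ring)]
  exact zero_div _

lemma gCov_zero_right {f g : X → ℝ} (h : ∀ x, g x = 0) (θ : Fin n → ℝ) :
    gCov w s f g θ = 0 := by
  unfold gCov
  rw [gE_zero (fun x => by rw [h x]; ring), gE_zero h]
  ring

lemma gCov_zero_left {f g : X → ℝ} (h : ∀ x, f x = 0) (θ : Fin n → ℝ) :
    gCov w s f g θ = 0 := by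
  unfold gCov
  rw [gE_zero (fun x => by rw [h x]; ring), gE_zero h]
  ring

lemma gKappa_zero {i j k : Fin n} (θ : Fin n → ℝ)
    (h : (∀ x, s x i = 0) ∨ (∀ x, s x j = 0) ∨ (∀ x, s x k = 0)) :
    gKappa w s i j k θ = 0 := by
  unfold gKappa
  rcases h with hi | hj | hk
  · rw [gCov_zero_right hi, gCov_zero_right hi, gCov_zero_right hi]; ring
  · rw [gCov_zero_left (fun x => by rw [hj x]; ring), gE_zero hj,
      gCov_zero_left hj]; ring
  · rw [gCov_zero_left (fun x => by rw [hk x]; ring), gCov_zero_left hk, gE_zero hk]; ring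

end General
section Bound
variable {X : Type*} [Fintype X]

lemma centered_expand (P u v z : X → ℝ) {A B C : ℝ} (hs : ∑ x, P x = 1) :
    ∑ x, P x * ((u x - A) * ((v x - B) * (z x - C)))
      = ∑ x, P x * (u x * v x * z x)
        - (∑ x, P x * (u x * v x)) * C - (∑ x, P x * (u x * z x)) * B
        - (∑ x, P x * (v x * z x)) * A
        + (∑ x, P x * u x) * (B * C) + (∑ x, P x * v x) * (A * C)
        + (∑ x, P x * z x) * (A * B) - A * (B * C) := by
  have h : ∀ x ∈ (univ : Finset X), P x * ((u x - A) * ((v x - B) * (z x - C)))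
      = P x * (u x * v x * z x) - (P x * (u x * v x)) * C - (P x * (u x * z x)) * B
        - (P x * (v x * z x)) * A + (P x * u x) * (B * C) + (P x * v x) * (A * C)
        + (P x * z x) * (A * B) - P x * (A * (B * C)) := fun x _ => by ring
  rw [Finset.sum_congr rfl h]
  simp only [Finset.sum_sub_distrib, Finset.sum_add_distrib, ← Finset.sum_mul]
  rw [hs]
  ring

lemma mean_abs_le (P f : X → ℝ) (hP : ∀ x, 0 ≤ P x) (hs : ∑ x, P x = 1)
    (M : ℝ) (hf : ∀ x, |f x| ≤ M) : |∑ x, P x * f x| ≤ M := by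
  calc |∑ x, P x * f x| ≤ ∑ x, |P x * f x| := Finset.abs_sum_le_sum_abs _ _
    _ = ∑ x, P x * |f x| := by
        refine Finset.sum_congr rfl fun x _ => ?_
        rw [abs_mul, abs_of_nonneg (hP x)]
    _ ≤ ∑ x, P x * M := Finset.sum_le_sum fun x _ =>
        mul_le_mul_of_nonneg_left (hf x) (hP x)
    _ = M := by rw [← Finset.sum_mul, hs, one_mul]

lemma var_le (P f : X → ℝ) (hP : ∀ x, 0 ≤ P x) (hs : ∑ x, P x = 1)
    (M : ℝ) (hf : ∀ x, |f x| ≤ M) :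
    ∑ x, P x * (f x - ∑ y, P y * f y) ^ 2 ≤ M ^ 2 := by
  set μ := ∑ y, P y * f y with hμ
  have h : ∀ x ∈ (univ : Finset X), P x * (f x - μ) ^ 2
      = P x * f x ^ 2 - 2 * ((P x * f x) * μ) + P x * μ ^ 2 := fun x _ => by ring
  rw [Finset.sum_congr rfl h]
  simp only [Finset.sum_add_distrib, Finset.sum_sub_distrib, ← Finset.mul_sum,
    ← Finset.sum_mul]
  rw [hs, ← hμ]
  have h1 : ∑ x, P x * f x ^ 2 ≤ M ^ 2 := by
    calc ∑ x, P x * f x ^ 2 ≤ ∑ x, P x * M ^ 2 := Finset.sum_le_sum fun x _ =>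
          mul_le_mul_of_nonneg_left
            (by nlinarith [hf x, abs_nonneg (f x), sq_abs (f x)]) (hP x)
      _ = M ^ 2 := by rw [← Finset.sum_mul, hs, one_mul]
  nlinarith [sq_nonneg μ]

lemma centered_bound (P u v z : X → ℝ) (hP : ∀ x, 0 ≤ P x) (hs : ∑ x, P x = 1)
    (M : ℝ) (hM : 0 ≤ M) (hu : ∀ x, |u x| ≤ M) (hv : ∀ x, |v x| ≤ M)
    (hz : ∀ x, |z x| ≤ M) :
    |∑ x, P x * ((u x - ∑ y, P y * u y) * ((v x - ∑ y, P y * v y) * (z x - ∑ y, P y * z y)))|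
      ≤ 2 * M ^ 3 := by
  set A := ∑ y, P y * u y with hA
  set B := ∑ y, P y * v y with hB
  set C := ∑ y, P y * z y with hC
  have hCabs : |C| ≤ M := mean_abs_le P z hP hs M hz
  calc |∑ x, P x * ((u x - A) * ((v x - B) * (z x - C)))|
      ≤ ∑ x, |P x * ((u x - A) * ((v x - B) * (z x - C)))| :=
        Finset.abs_sum_le_sum_abs _ _
    _ ≤ ∑ x, P x * (M * ((u x - A) ^ 2 + (v x - B) ^ 2)) := by
        refine Finset.sum_le_sum fun x _ => ?_
        rw [abs_mul, abs_of_nonneg (hP x)]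
        refine mul_le_mul_of_nonneg_left ?_ (hP x)
        have hzC : |z x - C| ≤ 2 * M := by
          calc |z x - C| ≤ |z x| + |C| := abs_sub _ _
            _ ≤ 2 * M := by linarith [hz x]
        have h2 : |(u x - A) * ((v x - B) * (z x - C))|
            = (|u x - A| * |v x - B|) * |z x - C| := by
          rw [abs_mul, abs_mul]; ring
        rw [h2]
        have h3 : |u x - A| * |v x - B| ≤ ((u x - A) ^ 2 + (v x - B) ^ 2) / 2 := by
          nlinarith [sq_nonneg (|u x - A| - |v x - B|), sq_abs (u x - A), sq_abs (v x - B)]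
        calc (|u x - A| * |v x - B|) * |z x - C|
            ≤ (((u x - A) ^ 2 + (v x - B) ^ 2) / 2) * (2 * M) := by
              refine mul_le_mul h3 hzC (abs_nonneg _) ?_
              positivity
          _ = M * ((u x - A) ^ 2 + (v x - B) ^ 2) := by ring
    _ = M * ((∑ x, P x * (u x - A) ^ 2) + ∑ x, P x * (v x - B) ^ 2) := by
        rw [Finset.sum_congr rfl (fun x _ => by ring :
          ∀ x ∈ (univ : Finset X), P x * (M * ((u x - A) ^ 2 + (v x - B) ^ 2))
            = M * (P x * (u x - A) ^ 2) + M * (P x * (v x - B) ^ 2))]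
        rw [Finset.sum_add_distrib, ← Finset.mul_sum, ← Finset.mul_sum]
        ring
    _ ≤ M * (M ^ 2 + M ^ 2) := by
        refine mul_le_mul_of_nonneg_left ?_ hM
        have := var_le P u hP hs M hu
        have := var_le P v hP hs M hv
        rw [← hA, ← hB] at *
        linarith
    _ = 2 * M ^ 3 := by ring

end Bound

section KB
variable {X : Type*} [Fintype X] {n : ℕ} {w : X → ℝ} {s : X → Fin n → ℝ}

lemma gE_eq_sum (hw : ∀ x, 0 ≤ w x) (hne : ∃ x, w x ≠ 0) (θ : Fin n → ℝ) (f : X → ℝ) :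
    gE w s f θ
      = ∑ x, (w x * Real.exp (∑ i, θ i * s x i) / gG w s (fun _ => 1) θ) * f x := by
  have hZ := (gG_pos w s hw hne θ).ne'
  unfold gE gG
  rw [Finset.sum_div]
  refine Finset.sum_congr rfl fun x _ => ?_
  ring

lemma gKappa_abs_le (hw : ∀ x, 0 ≤ w x) (hne : ∃ x, w x ≠ 0) (i j k : Fin n)
    (θ : Fin n → ℝ) (M : ℝ) (hM : 0 ≤ M)
    (hi : ∀ x, |s x i| ≤ M) (hj : ∀ x, |s x j| ≤ M) (hk : ∀ x, |s x k| ≤ M) :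
    |gKappa w s i j k θ| ≤ 2 * M ^ 3 := by
  set P : X → ℝ := fun x => w x * Real.exp (∑ i', θ i' * s x i') / gG w s (fun _ => 1) θ
    with hPdef
  have hZpos := gG_pos w s hw hne θ
  have hP : ∀ x, 0 ≤ P x := fun x => by
    have := hw x
    have := hZpos.le
    rw [hPdef]
    positivity
  have hPsum : ∑ x, P x = 1 := by
    rw [hPdef, ← Finset.sum_div]
    rw [div_eq_one_iff_eq hZpos.ne']
    unfold gG
    simp only [mul_one]
  have hE : ∀ f : X → ℝ, gE w s f θ = ∑ x, P x * f x := gE_eq_sum hw hne θ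
  have hkey : gKappa w s i j k θ
      = ∑ x, P x * ((s x k - ∑ y, P y * s y k)
          * ((s x j - ∑ y, P y * s y j) * (s x i - ∑ y, P y * s y i))) := by
    rw [centered_expand P (fun x => s x k) (fun x => s x j) (fun x => s x i) hPsum]
    simp only [gKappa, gCov, hE]
    ring
  rw [hkey]
  exact centered_bound P _ _ _ hP hPsum M hM hk hj hi
end KB

/-- Euclidean (ℓ₂) norm of a vector in `ℝⁿ`. -/
noncomputable def l2norm {n : ℕ} (v : Fin n → ℝ) : ℝ :=
  Real.sqrt (∑ i, v i ^ 2)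

/-- Smallest value of the quadratic form of a matrix on the Euclidean unit
sphere: the smallest eigenvalue `λ_min`, for a symmetric matrix. -/
noncomputable def rayMin {n : ℕ} (F : Matrix (Fin n) (Fin n) ℝ) : ℝ :=
  ⨅ v : {v : Fin n → ℝ // ∑ i, v i ^ 2 = 1}, ∑ i, ∑ j, v.1 i * F i j * v.1 j

/-- Largest value of the quadratic form of a matrix on the Euclidean unit
sphere: the largest eigenvalue `λ_max`, for a symmetric matrix. -/
noncomputable def rayMax {n : ℕ} (F : Matrix (Fin n) (Fin n) ℝ) : ℝ :=
  ⨆ v : {v : Fin n → ℝ // ∑ i, v i ^ 2 = 1}, ∑ i, ∑ j, v.1 i * F i j * v.1 j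

/-- Spectral norm (`ℓ₂` operator norm) of a matrix. -/
noncomputable def specNorm {n : ℕ} (F : Matrix (Fin n) (Fin n) ℝ) : ℝ :=
  ⨆ v : {v : Fin n → ℝ // ∑ i, v i ^ 2 = 1}, l2norm (F.mulVec v.1)

/-- Partial derivative in the `i`-th coordinate of a function of finitely many
real variables. -/
noncomputable def pderiv' {n : ℕ} (i : Fin n) (F : (Fin n → ℝ) → ℝ) :
    (Fin n → ℝ) → ℝ :=
  fun θ => deriv (fun t => F (Function.update θ i t)) (θ i)

/-- An exponential-family local dependence random graph model, together with
its data-generating parameter `θstar`. -/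
structure LDModel where
  /-- number of nodes -/
  nN : ℕ
  /-- number of blocks -/
  nK : ℕ
  /-- dimension of the within-block parameter -/
  nP : ℕ
  /-- dimension of the between-block parameter -/
  nQ : ℕ
  hN3 : 3 ≤ nN
  hK1 : 1 ≤ nK
  hp1 : 1 ≤ nP
  hq1 : 1 ≤ nQ
  /-- the blocks: a partition of the nodes into nonempty sets -/
  A : Fin nK → Finset (Fin nN)
  A_nonempty : ∀ k, (A k).Nonempty
  A_disjoint : ∀ k l, k ≠ l → Disjoint (A k) (A l)
  A_cover : ∀ i : Fin nN, ∃ k, i ∈ A k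
  /-- within-block sufficient statistics -/
  sWb : ∀ k : Fin nK, (Fin ((A k).card.choose 2) → Bool) → Fin nP → ℝ
  /-- between-block sufficient statistics -/
  sBb : ∀ e : {e : Fin nK × Fin nK // e.1 < e.2},
      (Fin ((A e.1.1).card * (A e.1.2).card) → Bool) → Fin nQ → ℝ
  /-- within-block reference functions -/
  hWb : ∀ k : Fin nK, (Fin ((A k).card.choose 2) → Bool) → ℝ
  /-- between-block reference functions -/
  hBb : ∀ e : {e : Fin nK × Fin nK // e.1 < e.2},
      (Fin ((A e.1.1).card * (A e.1.2).card) → Bool) → ℝ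
  hWb_nonneg : ∀ k x, 0 ≤ hWb k x
  hBb_nonneg : ∀ e x, 0 ≤ hBb e x
  hWb_ne : ∀ k, ∃ x, hWb k x ≠ 0
  hBb_ne : ∀ e, ∃ x, hBb e x ≠ 0
  /-- the data-generating parameter θ* = (θ*_W, θ*_B) -/
  θstar : Fin (nP + nQ) → ℝ

namespace LDModel

variable (M : LDModel)

/-- The index type of between-block pairs `1 ≤ k < l ≤ K`. -/
abbrev BPair := {e : Fin M.nK × Fin M.nK // e.1 < e.2}

/-- The (finite) space of graph configurations
`X = Π_{k} X_{k,k} × Π_{k<l} X_{k,l}`. -/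
abbrev Conf :=
  (∀ k : Fin M.nK, Fin ((M.A k).card.choose 2) → Bool) ×
  (∀ e : M.BPair, Fin ((M.A e.1.1).card * (M.A e.1.2).card) → Bool)

/-- `s_W(x) = Σ_k s_{k,k}(x_{k,k})`. -/
noncomputable def sW (x : M.Conf) : Fin M.nP → ℝ :=
  ∑ k, M.sWb k (x.1 k)

/-- `s_B(x) = Σ_{k<l} s_{k,l}(x_{k,l})`. -/
noncomputable def sB (x : M.Conf) : Fin M.nQ → ℝ :=
  ∑ e, M.sBb e (x.2 e)

/-- The full sufficient statistic `s(x) = (s_W(x), s_B(x)) ∈ ℝ^{p+q}`. -/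
noncomputable def svec (x : M.Conf) : Fin (M.nP + M.nQ) → ℝ :=
  Fin.append (M.sW x) (M.sB x)

/-- The reference function `h(x) = Π_{k≤l} h_{k,l}(x_{k,l})`. -/
noncomputable def href (x : M.Conf) : ℝ :=
  (∏ k, M.hWb k (x.1 k)) * ∏ e, M.hBb e (x.2 e)

/-- The log-normalizing constant `ψ(θ)`. -/
noncomputable def psi (θ : Fin (M.nP + M.nQ) → ℝ) : ℝ :=
  Real.log (∑ x : M.Conf, M.href x * Real.exp (∑ i, θ i * M.svec x i))

/-- The probability mass function `P_θ(X = x)`. -/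
noncomputable def prob (θ : Fin (M.nP + M.nQ) → ℝ) (x : M.Conf) : ℝ :=
  M.href x * Real.exp ((∑ i, θ i * M.svec x i) - M.psi θ)

/-- The log-likelihood `ℓ(θ, x) = log P_θ(X = x)`. -/
noncomputable def loglik (θ : Fin (M.nP + M.nQ) → ℝ) (x : M.Conf) : ℝ :=
  Real.log (M.prob θ x)

/-- Expectation `E_θ[f(X)]`. -/
noncomputable def expect (θ : Fin (M.nP + M.nQ) → ℝ) (f : M.Conf → ℝ) : ℝ :=
  ∑ x : M.Conf, M.prob θ x * f x

/-- Probability `P_θ(X ∈ E)`. -/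
noncomputable def probSet (θ : Fin (M.nP + M.nQ) → ℝ) (E : Set M.Conf) : ℝ :=
  ∑ x : M.Conf, E.indicator (M.prob θ) x

/-- Covariance `Cov_θ(f(X), g(X))`. -/
noncomputable def cov (θ : Fin (M.nP + M.nQ) → ℝ) (f g : M.Conf → ℝ) : ℝ :=
  M.expect θ (fun x => f x * g x) - M.expect θ f * M.expect θ g

/-- The within-block Fisher information block `−E∇²_{θ_W}ℓ(θ, X)`, which for
an exponential family equals the covariance matrix of `s_W(X)` under `P_θ`. -/
noncomputable def fisherW (θ : Fin (M.nP + M.nQ) → ℝ) :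
    Matrix (Fin M.nP) (Fin M.nP) ℝ :=
  fun i j => M.cov θ (fun x => M.sW x i) (fun x => M.sW x j)

/-- The between-block Fisher information block `−E∇²_{θ_B}ℓ(θ, X)`. -/
noncomputable def fisherB (θ : Fin (M.nP + M.nQ) → ℝ) :
    Matrix (Fin M.nQ) (Fin M.nQ) ℝ :=
  fun i j => M.cov θ (fun x => M.sB x i) (fun x => M.sB x j)

/-- The full Fisher information matrix `I(θ) = Cov_θ(s(X)) = −E∇²ℓ(θ, X)`. -/
noncomputable def fisherFull (θ : Fin (M.nP + M.nQ) → ℝ) :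
    Matrix (Fin (M.nP + M.nQ)) (Fin (M.nP + M.nQ)) ℝ :=
  fun i j => M.cov θ (fun x => M.svec x i) (fun x => M.svec x j)

/-- The size of the largest block. -/
def AmaxNat : ℕ := Finset.univ.sup fun k => (M.A k).card

/-- `A_max`, as a real number. -/
noncomputable def Amax : ℝ := (M.AmaxNat : ℝ)

/-- The average block size `A_avg = N / K`. -/
noncomputable def Aavg : ℝ := (M.nN : ℝ) / (M.nK : ℝ)

/-- `C(K,2) = K(K−1)/2`, as a real number. -/
noncomputable def KC2 : ℝ := (M.nK.choose 2 : ℝ)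

/-- The within-block part `θ_W` of a parameter vector. -/
def θW (θ : Fin (M.nP + M.nQ) → ℝ) : Fin M.nP → ℝ :=
  fun i => θ (Fin.castAdd M.nQ i)

/-- The between-block part `θ_B` of a parameter vector. -/
def θB (θ : Fin (M.nP + M.nQ) → ℝ) : Fin M.nQ → ℝ :=
  fun j => θ (Fin.natAdd M.nP j)

/-- `λ̃*_max,W = λ_max(−E∇²_{θ_W}ℓ(θ*, X)) / K`. -/
noncomputable def lamStarMaxW : ℝ := rayMax (M.fisherW M.θstar) / (M.nK : ℝ)

/-- `λ̃*_max,B = λ_max(−E∇²_{θ_B}ℓ(θ*, X)) / C(K,2)`. -/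
noncomputable def lamStarMaxB : ℝ := rayMax (M.fisherB M.θstar) / M.KC2

/-- `λ̃*_min,W = λ_min(−E∇²_{θ_W}ℓ(θ*, X)) / K`. -/
noncomputable def lamStarMinW : ℝ := rayMin (M.fisherW M.θstar) / (M.nK : ℝ)

/-- `λ̃*_min,B = λ_min(−E∇²_{θ_B}ℓ(θ*, X)) / C(K,2)`. -/
noncomputable def lamStarMinB : ℝ := rayMin (M.fisherB M.θstar) / M.KC2

/-- `λ̃ε_min,W = inf_{θ ∈ B₂(θ*,ε)} λ_min(−E∇²_{θ_W}ℓ(θ, X)) / K`. -/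
noncomputable def lamEpsMinW (ε : ℝ) : ℝ :=
  ⨅ θ : {θ : Fin (M.nP + M.nQ) → ℝ // l2norm (θ - M.θstar) < ε},
    rayMin (M.fisherW θ.1) / (M.nK : ℝ)

/-- `λ̃ε_min,B = inf_{θ ∈ B₂(θ*,ε)} λ_min(−E∇²_{θ_B}ℓ(θ, X)) / C(K,2)`. -/
noncomputable def lamEpsMinB (ε : ℝ) : ℝ :=
  ⨅ θ : {θ : Fin (M.nP + M.nQ) → ℝ // l2norm (θ - M.θstar) < ε},
    rayMin (M.fisherB θ.1) / M.KC2

/-- `λ̃ε_max,W = sup_{θ ∈ B₂(θ*,ε)} λ_max(−E∇²_{θ_W}ℓ(θ, X)) / K`. -/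
noncomputable def lamEpsMaxW (ε : ℝ) : ℝ :=
  ⨆ θ : {θ : Fin (M.nP + M.nQ) → ℝ // l2norm (θ - M.θstar) < ε},
    rayMax (M.fisherW θ.1) / (M.nK : ℝ)

/-- `λ̃ε_max,B = sup_{θ ∈ B₂(θ*,ε)} λ_max(−E∇²_{θ_B}ℓ(θ, X)) / C(K,2)`. -/
noncomputable def lamEpsMaxB (ε : ℝ) : ℝ :=
  ⨆ θ : {θ : Fin (M.nP + M.nQ) → ℝ // l2norm (θ - M.θstar) < ε},
    rayMax (M.fisherB θ.1) / M.KC2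

/-- Minimality of the exponential family: the coordinates of `s` together with
the constant function `1` are linearly independent on the support of `h`. -/
def Minimal : Prop :=
  ∀ (c : Fin (M.nP + M.nQ) → ℝ) (c₀ : ℝ),
    (∀ x : M.Conf, M.href x ≠ 0 → (∑ i, c i * M.svec x i) + c₀ = 0) →
    c = 0 ∧ c₀ = 0

/-- Assumption 1: the sufficient statistics scale with the number of edge
variables in each block-based subgraph. -/
def Assump1 (CW CB : ℝ) : Prop :=
  (∀ k x i, |M.sWb k x i| ≤ CW * ((M.A k).card.choose 2 : ℝ)) ∧
  (∀ e x j, |M.sBb e x j|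
      ≤ CB * (((M.A e.1.1).card : ℝ) * ((M.A e.1.2).card : ℝ)))

/-- Assumption 2: the averaged minimum eigenvalues of the Fisher information
blocks are positive on a neighborhood of `θ*`. -/
def Assump2 (ε : ℝ) : Prop :=
  0 < M.lamEpsMinW ε ∧ 0 < M.lamEpsMinB ε

/-- Assumption 4: a bound on the largest block size. -/
noncomputable def Assump4 : Prop :=
  M.Amax ≤ min
    ((((M.nN : ℝ) * M.lamStarMaxW) / (M.Aavg * (M.nP : ℝ) ^ 2)) ^ ((1 : ℝ) / 4))
    ((((M.nN : ℝ) ^ 2 * M.lamStarMaxB) /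
        (4 * M.Aavg ^ 2 * (M.nQ : ℝ) ^ 2)) ^ ((1 : ℝ) / 4))

/-- The within-block minimax risk in the ℓ₂-norm. -/
noncomputable def riskW : ENNReal :=
  ⨅ est : M.Conf → (Fin M.nP → ℝ),
    ⨆ θ : Fin (M.nP + M.nQ) → ℝ,
      ENNReal.ofReal (M.expect θ (fun x => l2norm (est x - M.θW θ)))

/-- The between-block minimax risk in the ℓ₂-norm. -/
noncomputable def riskB : ENNReal :=
  ⨅ est : M.Conf → (Fin M.nQ → ℝ),
    ⨆ θ : Fin (M.nP + M.nQ) → ℝ,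
      ENNReal.ofReal (M.expect θ (fun x => l2norm (est x - M.θB θ)))

end LDModel

/-- Assumption 3, for a sequence of models (little-o conditions on the spectral
quantities along the sequence). -/
def Assump3 (Mseq : ℕ → LDModel) (ε : ℝ) : Prop :=
  (∀ δ : ℝ, 0 < δ → ∃ N₀ : ℕ, ∀ N : ℕ, N₀ ≤ N →
      Real.sqrt (Mseq N).Aavg * Real.sqrt (Mseq N).lamStarMaxW
          / (Mseq N).lamEpsMinW ε
        ≤ δ * Real.sqrt ((N : ℝ) / ((Mseq N).nP : ℝ))) ∧
  (∀ δ : ℝ, 0 < δ → ∃ N₀ : ℕ, ∀ N : ℕ, N₀ ≤ N →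
      (Mseq N).Aavg * Real.sqrt (Mseq N).lamStarMaxB / (Mseq N).lamEpsMinB ε
        ≤ δ * Real.sqrt ((N : ℝ) ^ 2 / ((Mseq N).nQ : ℝ)))

namespace LDModel
variable (M : LDModel)

/-- Within-block statistic embedded in `ℝ^{p+q}`. -/
noncomputable def sblkW (k : Fin M.nK) (xk : Fin ((M.A k).card.choose 2) → Bool) :
    Fin (M.nP + M.nQ) → ℝ := Fin.append (M.sWb k xk) 0

/-- Between-block statistic embedded in `ℝ^{p+q}`. -/
noncomputable def sblkB (e : M.BPair)
    (xe : Fin ((M.A e.1.1).card * (M.A e.1.2).card) → Bool) :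
    Fin (M.nP + M.nQ) → ℝ := Fin.append 0 (M.sBb e xe)

lemma sblkW_lt (k : Fin M.nK) (xk : Fin ((M.A k).card.choose 2) → Bool)
    (i : Fin (M.nP + M.nQ)) (h : (i : ℕ) < M.nP) :
    M.sblkW k xk i = M.sWb k xk ⟨i, h⟩ := by
  have hi : i = Fin.castAdd M.nQ ⟨i, h⟩ := by ext; simp
  rw [sblkW]
  conv_lhs => rw [hi]
  rw [Fin.append_left]

lemma sblkW_ge (k : Fin M.nK) (xk : Fin ((M.A k).card.choose 2) → Bool)
    (i : Fin (M.nP + M.nQ)) (h : M.nP ≤ (i : ℕ)) :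
    M.sblkW k xk i = 0 := by
  have hi : i = Fin.natAdd M.nP ⟨i - M.nP, by omega⟩ := by
    ext; simp; omega
  rw [sblkW]
  conv_lhs => rw [hi]
  rw [Fin.append_right]
  rfl

lemma sblkB_lt (e : M.BPair) (xe : Fin ((M.A e.1.1).card * (M.A e.1.2).card) → Bool)
    (i : Fin (M.nP + M.nQ)) (h : (i : ℕ) < M.nP) :
    M.sblkB e xe i = 0 := by
  have hi : i = Fin.castAdd M.nQ ⟨i, h⟩ := by ext; simp
  rw [sblkB]
  conv_lhs => rw [hi]
  rw [Fin.append_left]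
  rfl

lemma sblkB_ge (e : M.BPair) (xe : Fin ((M.A e.1.1).card * (M.A e.1.2).card) → Bool)
    (i : Fin (M.nP + M.nQ)) (h : M.nP ≤ (i : ℕ)) :
    M.sblkB e xe i = M.sBb e xe ⟨i - M.nP, by omega⟩ := by
  have hi : i = Fin.natAdd M.nP ⟨i - M.nP, by omega⟩ := by
    ext; simp; omega
  rw [sblkB]
  conv_lhs => rw [hi]
  rw [Fin.append_right]

lemma ip_svec (θ : Fin (M.nP + M.nQ) → ℝ) (x : M.Conf) :
    (∑ i, θ i * M.svec x i)
      = (∑ k, ∑ i, θ i * M.sblkW k (x.1 k) i) + ∑ e, ∑ i, θ i * M.sblkB e (x.2 e) i := by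
  have hW : ∀ k, (∑ i, θ i * M.sblkW k (x.1 k) i)
      = ∑ i : Fin M.nP, θ (Fin.castAdd M.nQ i) * M.sWb k (x.1 k) i := by
    intro k
    rw [Fin.sum_univ_add]
    simp [sblkW, Fin.append_left, Fin.append_right]
  have hB : ∀ e, (∑ i, θ i * M.sblkB e (x.2 e) i)
      = ∑ i : Fin M.nQ, θ (Fin.natAdd M.nP i) * M.sBb e (x.2 e) i := by
    intro e
    rw [Fin.sum_univ_add]
    simp [sblkB, Fin.append_left, Fin.append_right]
  simp only [hW, hB]
  rw [svec, Fin.sum_univ_add]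
  simp only [Fin.append_left, Fin.append_right, sW, sB, Finset.sum_apply, Finset.mul_sum]
  rw [Finset.sum_comm, Finset.sum_comm (γ := Fin M.nQ)]

end LDModel

namespace LDModel
variable (M : LDModel)

lemma Z_decomp (θ : Fin (M.nP + M.nQ) → ℝ) :
    (∑ x : M.Conf, M.href x * Real.exp (∑ i, θ i * M.svec x i))
      = (∏ k, gG (M.hWb k) (M.sblkW k) (fun _ => 1) θ)
          * ∏ e, gG (M.hBb e) (M.sblkB e) (fun _ => 1) θ := by
  have hterm : ∀ x : M.Conf, M.href x * Real.exp (∑ i, θ i * M.svec x i)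
      = (∏ k, M.hWb k (x.1 k) * Real.exp (∑ i, θ i * M.sblkW k (x.1 k) i))
          * ∏ e, M.hBb e (x.2 e) * Real.exp (∑ i, θ i * M.sblkB e (x.2 e) i) := by
    intro x
    rw [href, ip_svec, Real.exp_add, Real.exp_sum, Real.exp_sum,
      Finset.prod_mul_distrib, Finset.prod_mul_distrib]
    ring
  rw [Finset.sum_congr rfl (fun x _ => hterm x)]
  rw [Fintype.sum_prod_type]
  simp only [gG, mul_one]
  rw [← Finset.sum_mul_sum]
  congr 1
  · exact (Fintype.prod_sum (κ := fun k => Fin ((M.A k).card.choose 2) → Bool)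
      (fun k y => M.hWb k y * Real.exp (∑ i, θ i * M.sblkW k y i))).symm
  · exact (Fintype.prod_sum (κ := fun e : M.BPair => Fin ((M.A e.1.1).card * (M.A e.1.2).card) → Bool)
      (fun e y => M.hBb e y * Real.exp (∑ i, θ i * M.sblkB e y i))).symm

lemma psi_decomp (θ : Fin (M.nP + M.nQ) → ℝ) :
    M.psi θ = (∑ k, gpsi (M.hWb k) (M.sblkW k) θ) + ∑ e, gpsi (M.hBb e) (M.sblkB e) θ := by
  have hWpos : ∀ k, 0 < gG (M.hWb k) (M.sblkW k) (fun _ => 1) θ :=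
    fun k => gG_pos _ _ (M.hWb_nonneg k) (M.hWb_ne k) θ
  have hBpos : ∀ e, 0 < gG (M.hBb e) (M.sblkB e) (fun _ => 1) θ :=
    fun e => gG_pos _ _ (M.hBb_nonneg e) (M.hBb_ne e) θ
  rw [psi, Z_decomp,
    Real.log_mul (Finset.prod_pos (fun k _ => hWpos k)).ne'
      (Finset.prod_pos (fun e _ => hBpos e)).ne',
    Real.log_prod (fun k _ => (hWpos k).ne'),
    Real.log_prod (fun e _ => (hBpos e).ne')]
  rfl

end LDModel

lemma card_bpair (K : ℕ) : Fintype.card {e : Fin K × Fin K // e.1 < e.2} = K.choose 2 := by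
  rw [Fintype.card_subtype]
  rw [Finset.card_filter]
  rw [Fintype.sum_prod_type]
  rw [Finset.sum_comm]
  have h1 : ∀ b : Fin K, (∑ a : Fin K, if a < b then 1 else 0) = (b : ℕ) := by
    intro b
    rw [← Finset.card_filter]
    have : Finset.univ.filter (fun a : Fin K => a < b) = Finset.Iio b := by
      ext a; simp
    rw [this, Fin.card_Iio]
  rw [Finset.sum_congr rfl (fun b _ => h1 b)]
  rw [Fin.sum_univ_eq_sum_range (fun i => i), Finset.sum_range_id, Nat.choose_two_right]

set_option maxHeartbeats 1600000

/-- **Third-derivative bounds for the log-likelihood of an exponential-family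
local dependence random graph model** (Lemmas 2.3–2.4 of the supplement).
Under Assumption 1 with constants `C_W, C_B > 0`, for every `θ`, `x` and
indices `(i, j, h)`: if all three indices are within-block indices the third
partial derivative of `ℓ(·, x)` is bounded by `A_max⁶·C_W²·(C_W+2)·K`; if all
three are between-block indices it is bounded by `2·A_max⁶·C_B²·(C_B+2)·C(K,2)`;
and if the triple mixes within- and between-block indices it vanishes. -/
theorem third_derivative_bounds (M : LDModel) (CW CB : ℝ)
    (hCW : 0 < CW) (hCB : 0 < CB) (hA1 : M.Assump1 CW CB)
    (θ : Fin (M.nP + M.nQ) → ℝ) (x : M.Conf)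
    (i j k : Fin (M.nP + M.nQ)) :
    (((i : ℕ) < M.nP → (j : ℕ) < M.nP → (k : ℕ) < M.nP →
      |pderiv' i (pderiv' j (pderiv' k (fun θ' => M.loglik θ' x))) θ|
        ≤ M.Amax ^ 6 * CW ^ 2 * (CW + 2) * (M.nK : ℝ))) ∧
    ((M.nP ≤ (i : ℕ) → M.nP ≤ (j : ℕ) → M.nP ≤ (k : ℕ) →
      |pderiv' i (pderiv' j (pderiv' k (fun θ' => M.loglik θ' x))) θ|
        ≤ 2 * M.Amax ^ 6 * CB ^ 2 * (CB + 2) * M.KC2)) ∧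
    ((((i : ℕ) < M.nP ∨ (j : ℕ) < M.nP ∨ (k : ℕ) < M.nP) ∧
        (M.nP ≤ (i : ℕ) ∨ M.nP ≤ (j : ℕ) ∨ M.nP ≤ (k : ℕ))) →
      pderiv' i (pderiv' j (pderiv' k (fun θ' => M.loglik θ' x))) θ = 0) := by
  have hAmax0 : (0:ℝ) ≤ M.Amax := Nat.cast_nonneg _
  have hCW2 : (0:ℝ) ≤ CW + 2 := by linarith
  have hCB2 : (0:ℝ) ≤ CB + 2 := by linarith
  have hKC2nn : (0:ℝ) ≤ M.KC2 := Nat.cast_nonneg _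
  have hRHS1 : (0:ℝ) ≤ M.Amax ^ 6 * CW ^ 2 * (CW + 2) * (M.nK : ℝ) := by
    have : (0:ℝ) ≤ M.Amax ^ 6 * CW ^ 2 := by positivity
    have h2 : (0:ℝ) ≤ M.Amax ^ 6 * CW ^ 2 * (CW + 2) := mul_nonneg this hCW2
    exact mul_nonneg h2 (Nat.cast_nonneg _)
  have hRHS2 : (0:ℝ) ≤ 2 * M.Amax ^ 6 * CB ^ 2 * (CB + 2) * M.KC2 := by
    have : (0:ℝ) ≤ 2 * M.Amax ^ 6 * CB ^ 2 := by positivity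
    exact mul_nonneg (mul_nonneg this hCB2) hKC2nn
  by_cases hx : M.href x = 0
  · -- degenerate case: the log-likelihood is constant zero
    have hll : (fun θ' => M.loglik θ' x) = fun _ => (0:ℝ) := by
      funext θ'
      rw [LDModel.loglik, LDModel.prob, hx, zero_mul, Real.log_zero]
    have hpz : ∀ a : Fin (M.nP + M.nQ),
        pderiv' a (fun _ : Fin (M.nP + M.nQ) → ℝ => (0:ℝ)) = fun _ => (0:ℝ) := by
      intro a; funext θ'; simp [pderiv']
    rw [hll, hpz, hpz, hpz]
    refine ⟨fun _ _ _ => ?_, fun _ _ _ => ?_, fun _ => rfl⟩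
    · simpa using hRHS1
    · simpa using hRHS2
  · -- main case
    have hcardle : ∀ b : Fin M.nK, ((M.A b).card : ℝ) ≤ M.Amax :=
      fun b => Nat.cast_le.mpr (Finset.le_sup (f := fun k => (M.A k).card) (Finset.mem_univ b))
    have hcc : ∀ b : Fin M.nK, (((M.A b).card.choose 2 : ℕ) : ℝ) ≤ M.Amax ^ 2 / 2 := by
      intro b
      set c := (M.A b).card with hc
      have h2 : (c.choose 2) * 2 ≤ c * c := by
        rw [Nat.choose_two_right]
        calc c * (c - 1) / 2 * 2 ≤ c * (c - 1) := Nat.div_mul_le_self _ _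
          _ ≤ c * c := Nat.mul_le_mul_left c (Nat.sub_le _ _)
      have h3 : ((c.choose 2 : ℕ) : ℝ) * 2 ≤ (c : ℝ) * c := by
        have h4 : ((c.choose 2 * 2 : ℕ) : ℝ) ≤ ((c * c : ℕ) : ℝ) := Nat.cast_le.mpr h2
        push_cast at h4
        linarith
      nlinarith [hcardle b, (Nat.cast_nonneg c : (0:ℝ) ≤ (c:ℝ))]
    -- decomposition of the log-likelihood
    have h0 : (fun θ' => M.loglik θ' x) = fun θ' =>
        Real.log (M.href x) + ((∑ i', θ' i' * M.svec x i')
          - ((∑ b, gpsi (M.hWb b) (M.sblkW b) θ')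
              + ∑ e, gpsi (M.hBb e) (M.sblkB e) θ')) := by
      funext θ'
      rw [LDModel.loglik, LDModel.prob, Real.log_mul hx (Real.exp_ne_zero _),
        Real.log_exp, LDModel.psi, ← LDModel.psi, M.psi_decomp θ']
    have h1 : pderiv' k (fun θ' =>
        Real.log (M.href x) + ((∑ i', θ' i' * M.svec x i')
          - ((∑ b, gpsi (M.hWb b) (M.sblkW b) θ')
              + ∑ e, gpsi (M.hBb e) (M.sblkB e) θ')))
        = fun θ' => M.svec x k
            - ((∑ b, gE (M.hWb b) (M.sblkW b) (fun y => M.sblkW b y k) θ')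
                + ∑ e, gE (M.hBb e) (M.sblkB e) (fun y => M.sblkB e y k) θ') := by
      funext θ'
      have hL : HasDerivAt (fun t => ∑ i', Function.update θ' k t i' * M.svec x i')
          (M.svec x k) (θ' k) := by
        have he : (fun t => ∑ i', Function.update θ' k t i' * M.svec x i')
            = fun t => (∑ i', θ' i' * M.svec x i') + (t - θ' k) * M.svec x k := by
          funext t; rw [sum_update]
        rw [he]
        simpa using (((hasDerivAt_id (θ' k)).sub_const (θ' k)).mul_const
          (M.svec x k)).const_add (∑ i', θ' i' * M.svec x i')
      have hW : HasDerivAt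
          (fun t => ∑ b, gpsi (M.hWb b) (M.sblkW b) (Function.update θ' k t))
          (∑ b, gE (M.hWb b) (M.sblkW b) (fun y => M.sblkW b y k) θ') (θ' k) :=
        HasDerivAt.fun_sum (fun b _ =>
          hasDerivAt_gpsi (w := M.hWb b) (s := M.sblkW b) (M.hWb_nonneg b) (M.hWb_ne b) θ' k)
      have hB : HasDerivAt
          (fun t => ∑ e, gpsi (M.hBb e) (M.sblkB e) (Function.update θ' k t))
          (∑ e, gE (M.hBb e) (M.sblkB e) (fun y => M.sblkB e y k) θ') (θ' k) :=
        HasDerivAt.fun_sum (fun e _ =>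
          hasDerivAt_gpsi (w := M.hBb e) (s := M.sblkB e) (M.hBb_nonneg e) (M.hBb_ne e) θ' k)
      exact ((hL.sub (hW.add hB)).const_add (Real.log (M.href x))).deriv
    have h2 : pderiv' j (fun θ' => M.svec x k
            - ((∑ b, gE (M.hWb b) (M.sblkW b) (fun y => M.sblkW b y k) θ')
                + ∑ e, gE (M.hBb e) (M.sblkB e) (fun y => M.sblkB e y k) θ'))
        = fun θ' => -((∑ b, gCov (M.hWb b) (M.sblkW b)
              (fun y => M.sblkW b y k) (fun y => M.sblkW b y j) θ')
            + ∑ e, gCov (M.hBb e) (M.sblkB e)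
              (fun y => M.sblkB e y k) (fun y => M.sblkB e y j) θ') := by
      funext θ'
      have hW : HasDerivAt
          (fun t => ∑ b, gE (M.hWb b) (M.sblkW b) (fun y => M.sblkW b y k)
            (Function.update θ' j t))
          (∑ b, gCov (M.hWb b) (M.sblkW b)
            (fun y => M.sblkW b y k) (fun y => M.sblkW b y j) θ') (θ' j) :=
        HasDerivAt.fun_sum (fun b _ =>
          hasDerivAt_gE (w := M.hWb b) (s := M.sblkW b) (M.hWb_nonneg b) (M.hWb_ne b)
            (fun y => M.sblkW b y k) θ' j)
      have hB : HasDerivAt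
          (fun t => ∑ e, gE (M.hBb e) (M.sblkB e) (fun y => M.sblkB e y k)
            (Function.update θ' j t))
          (∑ e, gCov (M.hBb e) (M.sblkB e)
            (fun y => M.sblkB e y k) (fun y => M.sblkB e y j) θ') (θ' j) :=
        HasDerivAt.fun_sum (fun e _ =>
          hasDerivAt_gE (w := M.hBb e) (s := M.sblkB e) (M.hBb_nonneg e) (M.hBb_ne e)
            (fun y => M.sblkB e y k) θ' j)
      exact ((hW.add hB).const_sub (M.svec x k)).deriv
    have h3 : pderiv' i (fun θ' => -((∑ b, gCov (M.hWb b) (M.sblkW b)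
              (fun y => M.sblkW b y k) (fun y => M.sblkW b y j) θ')
            + ∑ e, gCov (M.hBb e) (M.sblkB e)
              (fun y => M.sblkB e y k) (fun y => M.sblkB e y j) θ'))
        = fun θ' => -((∑ b, gKappa (M.hWb b) (M.sblkW b) i j k θ')
            + ∑ e, gKappa (M.hBb e) (M.sblkB e) i j k θ') := by
      funext θ'
      have hW : HasDerivAt
          (fun t => ∑ b, gCov (M.hWb b) (M.sblkW b)
              (fun y => M.sblkW b y k) (fun y => M.sblkW b y j) (Function.update θ' i t))
          (∑ b, gKappa (M.hWb b) (M.sblkW b) i j k θ') (θ' i) :=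
        HasDerivAt.fun_sum (fun b _ =>
          hasDerivAt_gCov (w := M.hWb b) (s := M.sblkW b) (M.hWb_nonneg b) (M.hWb_ne b)
            (fun y => M.sblkW b y k) (fun y => M.sblkW b y j) θ' i)
      have hB : HasDerivAt
          (fun t => ∑ e, gCov (M.hBb e) (M.sblkB e)
              (fun y => M.sblkB e y k) (fun y => M.sblkB e y j) (Function.update θ' i t))
          (∑ e, gKappa (M.hBb e) (M.sblkB e) i j k θ') (θ' i) :=
        HasDerivAt.fun_sum (fun e _ =>
          hasDerivAt_gCov (w := M.hBb e) (s := M.sblkB e) (M.hBb_nonneg e) (M.hBb_ne e)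
            (fun y => M.sblkB e y k) (fun y => M.sblkB e y j) θ' i)
      exact ((hW.add hB).neg).deriv
    rw [h0, h1, h2, h3]
    refine ⟨fun hip hjp hkp => ?_, fun hip hjp hkp => ?_, fun ⟨hlt, hge⟩ => ?_⟩
    · -- within-block case
      have hBzero : ∀ e : M.BPair, gKappa (M.hBb e) (M.sblkB e) i j k θ = 0 :=
        fun e => gKappa_zero θ (Or.inl (fun y => M.sblkB_lt e y i hip))
      have hmain : |∑ b, gKappa (M.hWb b) (M.sblkW b) i j k θ|
          ≤ M.Amax ^ 6 * CW ^ 2 * (CW + 2) * (M.nK : ℝ) := by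
        calc |∑ b, gKappa (M.hWb b) (M.sblkW b) i j k θ|
            ≤ ∑ b, |gKappa (M.hWb b) (M.sblkW b) i j k θ| :=
              Finset.abs_sum_le_sum_abs _ _
          _ ≤ ∑ _b : Fin M.nK, M.Amax ^ 6 * CW ^ 2 * (CW + 2) := by
              refine Finset.sum_le_sum fun b _ => ?_
              set Mb : ℝ := CW * (((M.A b).card.choose 2 : ℕ) : ℝ) with hMb
              have hMb0 : 0 ≤ Mb := by positivity
              have hbnd : ∀ (a : Fin (M.nP + M.nQ)), (a : ℕ) < M.nP →
                  ∀ y, |M.sblkW b y a| ≤ Mb := by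
                intro a ha y
                rw [M.sblkW_lt b y a ha]
                exact hA1.1 b y _
              have := gKappa_abs_le (M.hWb_nonneg b) (M.hWb_ne b) i j k θ Mb hMb0
                (hbnd i hip) (hbnd j hjp) (hbnd k hkp)
              refine le_trans this ?_
              have hccb := hcc b
              have hccnn : (0:ℝ) ≤ (((M.A b).card.choose 2 : ℕ) : ℝ) := Nat.cast_nonneg _
              have hcube : Mb ^ 3 ≤ (CW * (M.Amax ^ 2 / 2)) ^ 3 := by
                apply pow_le_pow_left₀ hMb0
                exact mul_le_mul_of_nonneg_left hccb hCW.le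
              nlinarith [pow_nonneg hAmax0 6, sq_nonneg CW,
                mul_nonneg (pow_nonneg hAmax0 6) (sq_nonneg CW)]
          _ = M.Amax ^ 6 * CW ^ 2 * (CW + 2) * (M.nK : ℝ) := by
              rw [Finset.sum_const, Finset.card_univ, Fintype.card_fin, nsmul_eq_mul]
              ring
      simpa [hBzero, Finset.sum_eq_zero (fun e _ => hBzero e)] using hmain
    · -- between-block case
      have hWzero : ∀ b : Fin M.nK, gKappa (M.hWb b) (M.sblkW b) i j k θ = 0 :=
        fun b => gKappa_zero θ (Or.inl (fun y => M.sblkW_ge b y i hip))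
      have hmain : |∑ e, gKappa (M.hBb e) (M.sblkB e) i j k θ|
          ≤ 2 * M.Amax ^ 6 * CB ^ 2 * (CB + 2) * M.KC2 := by
        calc |∑ e, gKappa (M.hBb e) (M.sblkB e) i j k θ|
            ≤ ∑ e, |gKappa (M.hBb e) (M.sblkB e) i j k θ| :=
              Finset.abs_sum_le_sum_abs _ _
          _ ≤ ∑ _e : M.BPair, 2 * M.Amax ^ 6 * CB ^ 2 * (CB + 2) := by
              refine Finset.sum_le_sum fun e _ => ?_
              set Me : ℝ := CB * (((M.A e.1.1).card : ℝ) * ((M.A e.1.2).card : ℝ)) with hMe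
              have hMe0 : 0 ≤ Me := by
                have := Nat.cast_nonneg (α := ℝ) (M.A e.1.1).card
                have := Nat.cast_nonneg (α := ℝ) (M.A e.1.2).card
                positivity
              have hbnd : ∀ (a : Fin (M.nP + M.nQ)), M.nP ≤ (a : ℕ) →
                  ∀ y, |M.sblkB e y a| ≤ Me := by
                intro a ha y
                rw [M.sblkB_ge e y a ha]
                exact hA1.2 e y _
              have := gKappa_abs_le (M.hBb_nonneg e) (M.hBb_ne e) i j k θ Me hMe0
                (hbnd i hip) (hbnd j hjp) (hbnd k hkp)
              refine le_trans this ?_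
              have hc1 := hcardle e.1.1
              have hc2 := hcardle e.1.2
              have hc1n : (0:ℝ) ≤ ((M.A e.1.1).card : ℝ) := Nat.cast_nonneg _
              have hc2n : (0:ℝ) ≤ ((M.A e.1.2).card : ℝ) := Nat.cast_nonneg _
              have hprod : ((M.A e.1.1).card : ℝ) * ((M.A e.1.2).card : ℝ)
                  ≤ M.Amax ^ 2 := by nlinarith
              have hcube : Me ^ 3 ≤ (CB * M.Amax ^ 2) ^ 3 := by
                apply pow_le_pow_left₀ hMe0
                exact mul_le_mul_of_nonneg_left hprod hCB.le
              nlinarith [pow_nonneg hAmax0 6, sq_nonneg CB,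
                mul_nonneg (pow_nonneg hAmax0 6) (sq_nonneg CB)]
          _ = 2 * M.Amax ^ 6 * CB ^ 2 * (CB + 2) * M.KC2 := by
              rw [Finset.sum_const, Finset.card_univ, nsmul_eq_mul]
              have : (Fintype.card M.BPair : ℝ) = M.KC2 := by
                rw [LDModel.KC2, card_bpair]
              rw [this]
              ring
      simpa [hWzero, Finset.sum_eq_zero (fun b _ => hWzero b)] using hmain
    · -- mixed case
      have hWzero : ∀ b : Fin M.nK, gKappa (M.hWb b) (M.sblkW b) i j k θ = 0 := by
        intro b
        rcases hge with h | h | h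
        · exact gKappa_zero θ (Or.inl (fun y => M.sblkW_ge b y i h))
        · exact gKappa_zero θ (Or.inr (Or.inl (fun y => M.sblkW_ge b y j h)))
        · exact gKappa_zero θ (Or.inr (Or.inr (fun y => M.sblkW_ge b y k h)))
      have hBzero : ∀ e : M.BPair, gKappa (M.hBb e) (M.sblkB e) i j k θ = 0 := by
        intro e
        rcases hlt with h | h | h
        · exact gKappa_zero θ (Or.inl (fun y => M.sblkB_lt e y i h))
        · exact gKappa_zero θ (Or.inr (Or.inl (fun y => M.sblkB_lt e y j h)))
        · exact gKappa_zero θ (Or.inr (Or.inr (fun y => M.sblkB_lt e y k h)))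
      simp [Finset.sum_eq_zero (fun b _ => hWzero b),
        Finset.sum_eq_zero (fun e _ => hBzero e)]
end

section
/- (Corollary 2.6, asymptotic normality) Consider a sequence of minimal exponential-family local dependence random graph models, indexed by N ∈ {3,4,…}, satisfying Assumptions 1, 2, 3, 4 and 5 with constants C_W, C_B, ε, L, U not depending on N, with fixed dimensions p, q ≥ 1 not depending on N and the conclusions of Theorem 2.5 available, and assume lim_{N→∞} max{ A_max⁶·√(A_avg·p⁵/N + A_avg²·q⁵/N²), (p+q)^{1/4}·A_max⁷·[√(p³/N) + √(q³/N²)] } = 0. Let θ̂ : X → ℝ^{p+q} be any map that equals the unique global maximizer of ℓ(·, x) whenever one exists. Then I(θ*)^{1/2}·(θ̂(X) − θ*) converges in distribution, as N → ∞, to a standard (p+q)-dimensional normal random vector (mean zero, identity covariance). -/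
open Finset MeasureTheory ProbabilityTheory

open Filter Finset MeasureTheory ProbabilityTheory


section AuxHelpers


lemma real_iInf_le {ι : Sort*} (g : ι → ℝ) (i : ι) (h : 0 < ⨅ j, g j) :
    (⨅ j, g j) ≤ g i := by
  by_cases hb : BddBelow (Set.range g)
  · exact ciInf_le hb i
  · rw [Real.iInf_of_not_bddBelow hb] at h; exact absurd h (lt_irrefl 0)

lemma real_iSup_nonneg {ι : Sort*} (g : ι → ℝ) (i : ι) (h : 0 ≤ g i) :
    0 ≤ ⨆ j, g j := by
  by_cases hb : BddAbove (Set.range g)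
  · exact le_trans h (le_ciSup hb i)
  · rw [Real.iSup_of_not_bddAbove hb]

lemma l2norm_nonneg {n : ℕ} (v : Fin n → ℝ) : 0 ≤ l2norm v := Real.sqrt_nonneg _

lemma abs_le_l2norm {n : ℕ} (v : Fin n → ℝ) (i : Fin n) : |v i| ≤ l2norm v := by
  rw [← Real.sqrt_sq_eq_abs]
  exact Real.sqrt_le_sqrt (Finset.single_le_sum (f := fun j => v j ^ 2)
    (fun j _ => sq_nonneg _) (Finset.mem_univ i))

lemma dist_le_l2norm {n : ℕ} (u v : Fin n → ℝ) : dist u v ≤ l2norm (u - v) := by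
  rw [dist_pi_le_iff (l2norm_nonneg _)]
  intro i
  rw [Real.dist_eq]
  simpa using abs_le_l2norm (u - v) i

lemma l2norm_reindex {n m : ℕ} (h : n = m) (v : Fin m → ℝ) :
    l2norm (fun i : Fin n => v (Fin.cast h i)) = l2norm v := by
  unfold l2norm
  congr 1
  exact Fintype.sum_equiv (finCongr h) _ _ (fun i => by simp)


/-- Index of the grid cell `[-M + j·s, -M + (j+1)·s)` containing `t`, where
`s = 2M/m`, clamped to `{0, …, m-1}`. -/
noncomputable def gridIdx (M m : ℕ) (t : ℝ) : ℕ :=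
  min (⌊(t + M) / (2 * M / m)⌋.toNat) (m - 1)

lemma gridIdx_lt {M m : ℕ} (hm : 1 ≤ m) (t : ℝ) : gridIdx M m t < m :=
  lt_of_le_of_lt (min_le_right _ _) (by omega)

lemma grid_step_pos {M m : ℕ} (hM : 1 ≤ M) (hm : 1 ≤ m) :
    (0:ℝ) < 2 * M / m := by
  have : (0:ℝ) < (M:ℝ) := by exact_mod_cast hM
  have : (0:ℝ) < (m:ℝ) := by exact_mod_cast hm
  positivity

lemma gridIdx_eq_floor {M m : ℕ} (hM : 1 ≤ M) (hm : 1 ≤ m) {t : ℝ}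
    (ht : -(M:ℝ) ≤ t) (ht' : t < M) :
    (gridIdx M m t : ℝ) = ⌊(t + M) / (2 * M / m)⌋ ∧
      (⌊(t + M) / (2 * M / m)⌋ : ℝ) < m := by
  set s : ℝ := 2 * M / m with hs
  have hspos : (0:ℝ) < s := grid_step_pos hM hm
  have hmpos : (0:ℝ) < (m:ℝ) := by exact_mod_cast hm
  have hms : (m:ℝ) * s = 2 * M := by rw [hs]; field_simp
  have hu0 : (0:ℝ) ≤ (t + M) / s := div_nonneg (by linarith) hspos.le
  have hum : (t + M) / s < m := by
    rw [div_lt_iff₀ hspos]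
    calc t + M < 2 * M := by linarith
    _ = (m:ℝ) * s := hms.symm
  have hfl0 : (0:ℤ) ≤ ⌊(t + M) / s⌋ := Int.floor_nonneg.mpr hu0
  have hflm : (⌊(t + M) / s⌋ : ℝ) < m := lt_of_le_of_lt (Int.floor_le _) hum
  have hflm' : ⌊(t + M) / s⌋ < (m:ℤ) := by exact_mod_cast hflm
  have htn : (⌊(t + M) / s⌋.toNat : ℤ) = ⌊(t + M) / s⌋ := Int.toNat_of_nonneg hfl0
  have hle : ⌊(t + M) / s⌋.toNat ≤ m - 1 := by omega
  refine ⟨?_, hflm⟩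
  rw [gridIdx, min_eq_left hle]
  exact_mod_cast htn

lemma gridIdx_mem {M m : ℕ} (hM : 1 ≤ M) (hm : 1 ≤ m) {t : ℝ}
    (ht : -(M:ℝ) ≤ t) (ht' : t < M) :
    -(M:ℝ) + gridIdx M m t * (2 * M / m) ≤ t ∧
      t < -(M:ℝ) + (gridIdx M m t + 1) * (2 * M / m) := by
  set s : ℝ := 2 * M / m with hs
  have hspos : (0:ℝ) < s := grid_step_pos hM hm
  obtain ⟨hg, _⟩ := gridIdx_eq_floor hM hm ht ht'
  have h1 : (⌊(t + M) / s⌋ : ℝ) ≤ (t + M) / s := Int.floor_le _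
  have h2 : (t + M) / s < ⌊(t + M) / s⌋ + 1 := Int.lt_floor_add_one _
  rw [← hs] at hg
  constructor
  · rw [hg]
    have := (mul_le_mul_of_nonneg_right h1 hspos.le)
    rw [div_mul_cancel₀ _ hspos.ne'] at this
    linarith
  · rw [hg]
    have := (mul_lt_mul_of_pos_right h2 hspos)
    rw [div_mul_cancel₀ _ hspos.ne'] at this
    linarith

lemma gridIdx_unique {M m : ℕ} (hM : 1 ≤ M) (hm : 1 ≤ m) {t : ℝ} {j : ℕ}
    (hj : j < m)
    (h1 : -(M:ℝ) + j * (2 * M / m) ≤ t)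
    (h2 : t < -(M:ℝ) + (j + 1) * (2 * M / m)) :
    gridIdx M m t = j := by
  set s : ℝ := 2 * M / m with hs
  have hspos : (0:ℝ) < s := grid_step_pos hM hm
  have hms : (m:ℝ) * s = 2 * M := by
    have hmpos : (0:ℝ) < (m:ℝ) := by exact_mod_cast hm
    rw [hs]; field_simp
  have hjm : (j:ℝ) + 1 ≤ (m:ℝ) := by exact_mod_cast hj
  have ht : -(M:ℝ) ≤ t := by nlinarith [hspos.le, mul_le_mul_of_nonneg_right hjm hspos.le]
  have ht' : t < M := by
    have : ((j:ℝ) + 1) * s ≤ (m:ℝ) * s :=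
      mul_le_mul_of_nonneg_right hjm hspos.le
    nlinarith
  obtain ⟨hg, _⟩ := gridIdx_eq_floor hM hm ht ht'
  rw [← hs] at hg
  have hfloor : ⌊(t + M) / s⌋ = (j:ℤ) := by
    rw [Int.floor_eq_iff]
    constructor
    · rw [le_div_iff₀ hspos]; push_cast; linarith
    · rw [div_lt_iff₀ hspos]; push_cast; linarith
  have : (gridIdx M m t : ℝ) = (j:ℝ) := by rw [hg, hfloor]; norm_num
  exact_mod_cast this


lemma gauss_cube (d : ℕ) (ε : ℝ) (hε : 0 < ε) :
    ∃ M : ℕ, 1 ≤ M ∧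
      (((Measure.pi fun _ : Fin d => gaussianReal 0 1)
        (Set.univ.pi fun _ : Fin d => Set.Ico (-(M:ℝ)) (M:ℝ))ᶜ)).toReal ≤ ε := by
  set Φ : Measure (Fin d → ℝ) := Measure.pi fun _ : Fin d => gaussianReal 0 1 with hΦ
  have hprob : IsProbabilityMeasure Φ := by rw [hΦ]; infer_instance
  set QM : ℕ → Set (Fin d → ℝ) :=
    fun M => Set.univ.pi fun _ : Fin d => Set.Ico (-(M:ℝ)) (M:ℝ) with hQM
  have hmono : Monotone QM := by
    intro a b hab
    apply Set.pi_mono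
    intro i _
    apply Set.Ico_subset_Ico <;> · simp; exact_mod_cast hab
  have hunion : (⋃ M, QM M) = Set.univ := by
    ext v
    simp only [Set.mem_iUnion, Set.mem_univ, iff_true, hQM, Set.mem_pi,
      Set.mem_Ico]
    obtain ⟨M, hM⟩ := exists_nat_gt (∑ i, |v i|)
    refine ⟨M, fun i _ => ?_⟩
    have h1 : |v i| ≤ ∑ j, |v j| :=
      Finset.single_le_sum (f := fun j => |v j|) (fun j _ => abs_nonneg _)
        (Finset.mem_univ i)
    have h2 : |v i| < M := lt_of_le_of_lt h1 hM
    rw [abs_lt] at h2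
    exact ⟨h2.1.le, h2.2⟩
  have htend : Tendsto (fun M => (Φ (QM M)).toReal) atTop (nhds 1) := by
    have h1 := tendsto_measure_iUnion_atTop (μ := Φ) hmono
    rw [hunion] at h1
    have h2 : Φ Set.univ = 1 := measure_univ
    rw [h2] at h1
    have := (ENNReal.tendsto_toReal ENNReal.one_ne_top).comp h1
    exact this
  have hev : ∀ᶠ M in atTop, 1 - ε < (Φ (QM M)).toReal :=
    htend.eventually (eventually_gt_nhds (by linarith))
  obtain ⟨M, hM1, hM2⟩ := ((eventually_ge_atTop 1).and hev).exists
  refine ⟨M, hM1, ?_⟩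
  have hmeas : MeasurableSet (QM M) :=
    MeasurableSet.univ_pi fun i => measurableSet_Ico
  have hc : Φ (QM M)ᶜ = 1 - Φ (QM M) := by
    rw [measure_compl hmeas (measure_ne_top _ _), measure_univ]
  rw [hc, ENNReal.toReal_sub_of_le prob_le_one ENNReal.one_ne_top]
  simp only [ENNReal.toReal_one]
  linarith

/-- The half-open cube `[-M, M)^d`. -/
def cubeQ (d M : ℕ) : Set (Fin d → ℝ) :=
  Set.univ.pi fun _ : Fin d => Set.Ico (-(M:ℝ)) (M:ℝ)

/-- The closed cube `[-M-1, M+1]^d`. -/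
def cubeK (d M : ℕ) : Set (Fin d → ℝ) :=
  Set.univ.pi fun _ : Fin d => Set.Icc (-(M:ℝ) - 1) ((M:ℝ) + 1)

/-- Grid box indexed by `g`. -/
def boxSet (d M m : ℕ) (g : Fin d → Fin m) : Set (Fin d → ℝ) :=
  Set.univ.pi fun i : Fin d =>
    Set.Ico (-(M:ℝ) + ((g i : ℕ) : ℝ) * (2 * M / m))
      (-(M:ℝ) + (((g i : ℕ) : ℝ) + 1) * (2 * M / m))

/-- Corner of a grid box. -/
noncomputable def cornerPt (d M m : ℕ) (g : Fin d → Fin m) : Fin d → ℝ :=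
  fun i => -(M:ℝ) + ((g i : ℕ) : ℝ) * (2 * M / m)

/-- Classifier. -/
noncomputable def classify (d M m : ℕ) (hm : 1 ≤ m) (v : Fin d → ℝ) :
    Fin d → Fin m :=
  fun i => ⟨gridIdx M m (v i), gridIdx_lt hm (v i)⟩

section boxfacts
variable {d M m : ℕ}

lemma step_pos (hM : 1 ≤ M) (hm : 1 ≤ m) : (0:ℝ) < 2 * M / m := by
  have h1 : (0:ℝ) < (M:ℝ) := by exact_mod_cast hM
  have h2 : (0:ℝ) < (m:ℝ) := by exact_mod_cast hm
  positivity

lemma step_mul (hm : 1 ≤ m) : (m:ℝ) * (2 * M / m) = 2 * M := by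
  have h2 : (m:ℝ) ≠ 0 := by positivity
  field_simp

lemma cubeQ_measurable : MeasurableSet (cubeQ d M) :=
  MeasurableSet.univ_pi fun _ => measurableSet_Ico

lemma cubeQ_convex : Convex ℝ (cubeQ d M) := convex_pi fun _ _ => convex_Ico _ _

lemma boxSet_measurable (g : Fin d → Fin m) : MeasurableSet (boxSet d M m g) :=
  MeasurableSet.univ_pi fun _ => measurableSet_Ico

lemma boxSet_convex (g : Fin d → Fin m) : Convex ℝ (boxSet d M m g) :=
  convex_pi fun _ _ => convex_Ico _ _

lemma mem_cubeQ {v : Fin d → ℝ} :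
    v ∈ cubeQ d M ↔ ∀ i, -(M:ℝ) ≤ v i ∧ v i < M := by
  simp [cubeQ, Set.mem_pi, Set.mem_Ico]

lemma mem_boxSet {v : Fin d → ℝ} {g : Fin d → Fin m} :
    v ∈ boxSet d M m g ↔ ∀ i,
      -(M:ℝ) + ((g i : ℕ) : ℝ) * (2 * M / m) ≤ v i ∧
        v i < -(M:ℝ) + (((g i : ℕ) : ℝ) + 1) * (2 * M / m) := by
  simp [boxSet, Set.mem_pi, Set.mem_Ico]

lemma boxSet_subset_cubeQ (hM : 1 ≤ M) (hm : 1 ≤ m) (g : Fin d → Fin m) :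
    boxSet d M m g ⊆ cubeQ d M := by
  intro v hv
  rw [mem_cubeQ]
  rw [mem_boxSet] at hv
  intro i
  obtain ⟨h1, h2⟩ := hv i
  have hspos := step_pos hM hm (m := m)
  have hj0 : (0:ℝ) ≤ ((g i : ℕ) : ℝ) := Nat.cast_nonneg _
  have hj : ((g i : ℕ) : ℝ) + 1 ≤ (m:ℝ) := by exact_mod_cast (g i).isLt
  have hmul : (((g i : ℕ) : ℝ) + 1) * (2 * M / m) ≤ (m:ℝ) * (2 * M / m) :=
    mul_le_mul_of_nonneg_right hj hspos.le
  have hms := step_mul (M := M) hm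
  have hj0' : (0:ℝ) ≤ ((g i : ℕ) : ℝ) * (2 * M / m) := mul_nonneg hj0 hspos.le
  constructor
  · linarith
  · linarith

lemma classify_mem (hM : 1 ≤ M) (hm : 1 ≤ m) {v : Fin d → ℝ} (hv : v ∈ cubeQ d M) :
    v ∈ boxSet d M m (classify d M m hm v) := by
  rw [mem_cubeQ] at hv
  rw [mem_boxSet]
  intro i
  exact gridIdx_mem hM hm (hv i).1 (hv i).2

lemma classify_unique (hM : 1 ≤ M) (hm : 1 ≤ m) {v : Fin d → ℝ} {g : Fin d → Fin m}
    (hv : v ∈ boxSet d M m g) : classify d M m hm v = g := by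
  rw [mem_boxSet] at hv
  funext i
  apply Fin.ext
  exact gridIdx_unique hM hm (g i).isLt (hv i).1 (hv i).2

lemma boxSet_disjoint (hM : 1 ≤ M) (hm : 1 ≤ m) :
    Pairwise (Function.onFun Disjoint (boxSet d M m)) := by
  intro g g' hne
  rw [Function.onFun, Set.disjoint_left]
  intro v hv hv'
  exact hne ((classify_unique hM hm hv).symm.trans (classify_unique hM hm hv'))

lemma iUnion_boxSet (hM : 1 ≤ M) (hm : 1 ≤ m) : (⋃ g, boxSet d M m g) = cubeQ d M := by
  apply subset_antisymm
  · exact Set.iUnion_subset (boxSet_subset_cubeQ hM hm)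
  · intro v hv
    exact Set.mem_iUnion.mpr ⟨classify d M m hm v, classify_mem hM hm hv⟩

lemma cornerPt_mem (hM : 1 ≤ M) (hm : 1 ≤ m) (g : Fin d → Fin m) :
    cornerPt d M m g ∈ boxSet d M m g := by
  rw [mem_boxSet]
  intro i
  have hspos := step_pos hM hm (m := m)
  have hx : (((g i : ℕ) : ℝ) + 1) * (2 * M / m)
      = ((g i : ℕ) : ℝ) * (2 * M / m) + (2 * M / m) := by ring
  unfold cornerPt
  constructor
  · exact le_refl _
  · rw [hx]; linarith

lemma dist_cornerPt_le (hM : 1 ≤ M) (hm : 1 ≤ m) {v : Fin d → ℝ} {g : Fin d → Fin m}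
    (hv : v ∈ boxSet d M m g) : dist v (cornerPt d M m g) ≤ 2 * M / m := by
  rw [mem_boxSet] at hv
  rw [dist_pi_le_iff (step_pos hM hm).le]
  intro i
  rw [Real.dist_eq, abs_le]
  obtain ⟨h1, h2⟩ := hv i
  have hx : (((g i : ℕ) : ℝ) + 1) * (2 * M / m)
      = ((g i : ℕ) : ℝ) * (2 * M / m) + (2 * M / m) := by ring
  rw [hx] at h2
  have hc : cornerPt d M m g i = -(M:ℝ) + ((g i : ℕ) : ℝ) * (2 * M / m) := rfl
  rw [hc]
  constructor <;> linarith [step_pos (M := M) hM hm]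

lemma cubeQ_subset_cubeK : cubeQ d M ⊆ cubeK d M := by
  intro v hv
  rw [mem_cubeQ] at hv
  rw [cubeK, Set.mem_pi]
  intro i _
  rw [Set.mem_Icc]
  obtain ⟨h1, h2⟩ := hv i
  constructor <;> linarith

lemma cubeK_compact : IsCompact (cubeK d M) :=
  isCompact_univ_pi fun _ => isCompact_Icc

lemma mem_cubeK_of_near {u v : Fin d → ℝ} (hv : v ∈ cubeQ d M)
    (hd : dist u v ≤ 1) : u ∈ cubeK d M := by
  rw [mem_cubeQ] at hv
  rw [cubeK, Set.mem_pi]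
  intro i _
  rw [Set.mem_Icc]
  have hi : dist (u i) (v i) ≤ 1 := le_trans (dist_le_pi_dist u v i) hd
  rw [Real.dist_eq, abs_le] at hi
  obtain ⟨h1, h2⟩ := hv i
  constructor <;> linarith

lemma measure_cubeQ_sum (hM : 1 ≤ M) (hm : 1 ≤ m) (μ : Measure (Fin d → ℝ)) [IsFiniteMeasure μ] :
    (μ (cubeQ d M)).toReal = ∑ g : Fin d → Fin m, (μ (boxSet d M m g)).toReal := by
  have h1 : μ (⋃ g, boxSet d M m g) = ∑' g, μ (boxSet d M m g) :=
    measure_iUnion (boxSet_disjoint hM hm) (boxSet_measurable)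
  rw [iUnion_boxSet hM hm, tsum_fintype] at h1
  rw [h1, ENNReal.toReal_sum fun _ _ => measure_ne_top _ _]

lemma integral_cubeQ_sum (hM : 1 ≤ M) (hm : 1 ≤ m) (μ : Measure (Fin d → ℝ)) [IsFiniteMeasure μ]
    {f : (Fin d → ℝ) → ℝ} (hfint : Integrable f μ) :
    (∫ v in cubeQ d M, f v ∂μ) = ∑ g : Fin d → Fin m, ∫ v in boxSet d M m g, f v ∂μ := by
  have h1 := integral_iUnion (boxSet_measurable) (boxSet_disjoint hM hm)
    (hfint.integrableOn (s := ⋃ g, boxSet d M m g))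
  rw [iUnion_boxSet hM hm, tsum_fintype] at h1
  exact h1

end boxfacts

theorem core_weak
    (d : ℕ) (f : (Fin d → ℝ) → ℝ) (hf : Continuous f) (Cb : ℝ)
    (hfb : ∀ v, |f v| ≤ Cb)
    (X : ℕ → Type) [inst : ∀ N, Fintype (X N)]
    (w : ∀ N, X N → ℝ) (Z Δ : ∀ N, X N → (Fin d → ℝ))
    (η δ' ρ : ℕ → ℝ)
    (hηlim : Tendsto η atTop (nhds 0))
    (hδlim : Tendsto δ' atTop (nhds 0))
    (hρlim : Tendsto ρ atTop (nhds 0))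
    (hw0 : ∀ N x, 0 ≤ w N x)
    (hw1 : ∀ᶠ N in atTop, ∑ x, w N x = 1)
    (hconv : ∀ᶠ N in atTop, ∀ 𝒞 : Set (Fin d → ℝ), Convex ℝ 𝒞 →
        MeasurableSet 𝒞 →
        |(∑ x, Set.indicator {y : X N | Z N y ∈ 𝒞} (w N) x)
          - (((Measure.pi fun _ : Fin d => gaussianReal 0 1) 𝒞)).toReal| ≤ η N)
    (hΔ : ∀ᶠ N in atTop,
        1 - ρ N ≤ ∑ x, Set.indicator {y : X N | l2norm (Δ N y) ≤ δ' N} (w N) x) :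
    Tendsto (fun N => ∑ x, w N x * f (Z N x - Δ N x)) atTop
      (nhds (∫ v, f v ∂(Measure.pi fun _ : Fin d => gaussianReal 0 1))) := by
  classical
  set Φ : Measure (Fin d → ℝ) := Measure.pi fun _ : Fin d => gaussianReal 0 1
    with hΦdef
  have hprob : IsProbabilityMeasure Φ := by rw [hΦdef]; infer_instance
  have hCb0 : 0 ≤ Cb := le_trans (abs_nonneg _) (hfb 0)
  have hfint : Integrable f Φ := by
    refine Integrable.mono' (integrable_const Cb) hf.aestronglyMeasurable ?_
    exact Eventually.of_forall fun v => by rw [Real.norm_eq_abs]; exact hfb v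
  rw [Metric.tendsto_atTop]
  intro ε' hε'
  set ε₁ : ℝ := ε' / (8 * (Cb + 1)) with hε₁def
  have hε₁ : 0 < ε₁ := by positivity
  -- Step 1: big cube
  obtain ⟨M, hM1, hQc⟩ := gauss_cube d ε₁ hε₁
  have hQc : (Φ (cubeQ d M)ᶜ).toReal ≤ ε₁ := hQc
  have hQsplit : (Φ (cubeQ d M)).toReal + (Φ (cubeQ d M)ᶜ).toReal = 1 := by
    have h1 : Φ (cubeQ d M) + Φ (cubeQ d M)ᶜ = 1 := by
      rw [measure_add_measure_compl cubeQ_measurable, measure_univ]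
    have := congrArg ENNReal.toReal h1
    rwa [ENNReal.toReal_add (measure_ne_top _ _) (measure_ne_top _ _),
      ENNReal.toReal_one] at this
  have hΦQle1 : (Φ (cubeQ d M)).toReal ≤ 1 := by
    have : 0 ≤ (Φ (cubeQ d M)ᶜ).toReal := ENNReal.toReal_nonneg
    linarith
  have hΦQge : 1 - ε₁ ≤ (Φ (cubeQ d M)).toReal := by linarith
  -- Step 2: uniform continuity on the compact cube
  obtain ⟨δ₁, hδ₁pos, hδ₁⟩ := Metric.uniformContinuousOn_iff_le.mp
    ((cubeK_compact (d := d) (M := M)).uniformContinuousOn_of_continuous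
      hf.continuousOn) ε₁ hε₁
  set δ₀ : ℝ := min δ₁ 1 with hδ₀def
  have hδ₀pos : 0 < δ₀ := lt_min hδ₁pos one_pos
  have hδ₀le1 : δ₀ ≤ 1 := min_le_right _ _
  have hδ₀leδ₁ : δ₀ ≤ δ₁ := min_le_left _ _
  have hosc : ∀ u ∈ cubeK d M, ∀ v ∈ cubeK d M, dist u v ≤ δ₀ →
      |f u - f v| ≤ ε₁ := by
    intro u hu v hv hd
    rw [← Real.dist_eq]
    exact hδ₁ u hu v hv (le_trans hd hδ₀leδ₁)
  -- Step 3: grid size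
  obtain ⟨m, hmgt⟩ := exists_nat_gt (4 * (M:ℝ) / δ₀)
  have hm1 : 1 ≤ m := by
    rcases Nat.eq_zero_or_pos m with h | h
    · rw [h] at hmgt
      have h2 : (0:ℝ) < 4 * (M:ℝ) / δ₀ := by
        have : (1:ℝ) ≤ (M:ℝ) := by exact_mod_cast hM1
        positivity
      simp only [Nat.cast_zero] at hmgt
      linarith
    · exact h
  have hspos : (0:ℝ) < 2 * M / m := step_pos hM1 hm1
  have hsle : 2 * (M:ℝ) / m ≤ δ₀ / 2 := by
    have hδ₀pos' := hδ₀pos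
    have h1 : 4 * (M:ℝ) < δ₀ * m := by
      have := (div_lt_iff₀ hδ₀pos).mp hmgt
      linarith
    have hmpos : (0:ℝ) < (m:ℝ) := by exact_mod_cast hm1
    rw [div_le_div_iff₀ hmpos two_pos]
    linarith
  have hcgK : ∀ g : Fin d → Fin m, cornerPt d M m g ∈ cubeK d M := fun g =>
    cubeQ_subset_cubeK (boxSet_subset_cubeQ hM1 hm1 g (cornerPt_mem hM1 hm1 g))
  -- integral identities
  have hI4 : ∀ g : Fin d → Fin m,
      |(∫ v in boxSet d M m g, f v ∂Φ)
        - f (cornerPt d M m g) * (Φ (boxSet d M m g)).toReal|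
      ≤ ε₁ * (Φ (boxSet d M m g)).toReal := by
    intro g
    have hsub : (∫ v in boxSet d M m g, f v ∂Φ)
        - f (cornerPt d M m g) * (Φ (boxSet d M m g)).toReal
        = ∫ v in boxSet d M m g, (f v - f (cornerPt d M m g)) ∂Φ := by
      rw [integral_sub (hfint.integrableOn)
        (integrableOn_const (measure_ne_top _ _))]
      rw [setIntegral_const, smul_eq_mul, mul_comm]
      rfl
    rw [hsub]
    have hbd : ∀ v ∈ boxSet d M m g, ‖f v - f (cornerPt d M m g)‖ ≤ ε₁ := by
      intro v hv
      rw [Real.norm_eq_abs]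
      refine hosc v (cubeQ_subset_cubeK (boxSet_subset_cubeQ hM1 hm1 g hv)) _
        (hcgK g) (le_trans (dist_cornerPt_le hM1 hm1 hv) (by linarith))
    have := norm_setIntegral_le_of_norm_le_const (μ := Φ) (s := boxSet d M m g)
      (C := ε₁) (f := fun v => f v - f (cornerPt d M m g)) (measure_lt_top _ _)
      hbd
    rwa [Real.norm_eq_abs] at this
  have hI5 : |∫ v in (cubeQ d M)ᶜ, f v ∂Φ| ≤ Cb * ε₁ := by
    have h1 := norm_setIntegral_le_of_norm_le_const (μ := Φ) (s := (cubeQ d M)ᶜ)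
      (C := Cb) (f := f) (measure_lt_top _ _)
      (fun v _ => by rw [Real.norm_eq_abs]; exact hfb v)
    rw [Real.norm_eq_abs] at h1
    calc |∫ v in (cubeQ d M)ᶜ, f v ∂Φ| ≤ Cb * (Φ (cubeQ d M)ᶜ).toReal := h1
    _ ≤ Cb * ε₁ := mul_le_mul_of_nonneg_left hQc hCb0
  have hIsplit : (∫ v in cubeQ d M, f v ∂Φ) + (∫ v in (cubeQ d M)ᶜ, f v ∂Φ)
      = ∫ v, f v ∂Φ := integral_add_compl cubeQ_measurable hfint
  -- eventual hypotheses
  set mcard : ℝ := (Fintype.card (Fin d → Fin m) : ℝ) with hmcdef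
  have hmc0 : 0 ≤ mcard := Nat.cast_nonneg _
  have herrlim : Tendsto (fun N => 2 * Cb * ρ N + Cb * (mcard + 1) * η N)
      atTop (nhds 0) := by
    have := ((hρlim.const_mul (2 * Cb)).add (hηlim.const_mul (Cb * (mcard + 1))))
    simpa using this
  have herrev : ∀ᶠ N in atTop,
      2 * Cb * ρ N + Cb * (mcard + 1) * η N < ε' / 4 :=
    herrlim.eventually (eventually_lt_nhds (by linarith))
  have hδev : ∀ᶠ N in atTop, δ' N ≤ δ₀ / 2 :=
    hδlim.eventually (eventually_le_nhds (by linarith))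
  have hall := (((hw1.and hconv).and (hΔ.and hδev)).and herrev)
  rw [eventually_atTop] at hall
  obtain ⟨N₀, hN₀⟩ := hall
  refine ⟨N₀, fun N hN => ?_⟩
  obtain ⟨⟨⟨hw1N, hconvN⟩, ⟨hΔN, hδN⟩⟩, herrN⟩ := hN₀ N hN
  -- abbreviations
  have hind : ∀ S : Set (Fin d → ℝ),
      (∑ x, Set.indicator {y : X N | Z N y ∈ S} (w N) x)
        = ∑ x, if Z N x ∈ S then w N x else 0 :=
    fun S => Finset.sum_congr rfl fun x _ => by simp [Set.indicator_apply]
  have hPZconv : ∀ S : Set (Fin d → ℝ), Convex ℝ S → MeasurableSet S →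
      |(∑ x, if Z N x ∈ S then w N x else 0) - (Φ S).toReal| ≤ η N := by
    intro S h1 h2
    have := hconvN S h1 h2
    rwa [hind] at this
  have hPZQc : (∑ x, if Z N x ∈ (cubeQ d M)ᶜ then w N x else 0)
      ≤ ε₁ + η N := by
    have hsplit : (∑ x, if Z N x ∈ cubeQ d M then w N x else 0)
        + (∑ x, if Z N x ∈ (cubeQ d M)ᶜ then w N x else 0) = 1 := by
      rw [← Finset.sum_add_distrib, ← hw1N]
      refine Finset.sum_congr rfl fun x _ => ?_
      by_cases h : Z N x ∈ cubeQ d M <;> simp [h]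
    have h2 := abs_le.mp (hPZconv (cubeQ d M) cubeQ_convex cubeQ_measurable)
    linarith
  have hGsum : 1 - ρ N ≤ ∑ x, if l2norm (Δ N x) ≤ δ' N then w N x else 0 := by
    have heq : (∑ x, Set.indicator {y : X N | l2norm (Δ N y) ≤ δ' N} (w N) x)
        = ∑ x, if l2norm (Δ N x) ≤ δ' N then w N x else 0 :=
      Finset.sum_congr rfl fun x _ => by simp [Set.indicator_apply]
    rw [← heq]
    exact hΔN
  -- T and φ
  set T : ℝ := ∑ g : Fin d → Fin m, f (cornerPt d M m g)
      * (∑ x, if Z N x ∈ boxSet d M m g then w N x else 0) with hTdef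
  set φ : X N → ℝ := fun x => if Z N x ∈ cubeQ d M
      then f (cornerPt d M m (classify d M m hm1 (Z N x))) else 0 with hφdef
  have hTφ : T = ∑ x, w N x * φ x := by
    rw [hTdef]
    simp_rw [Finset.mul_sum]
    rw [Finset.sum_comm]
    refine Finset.sum_congr rfl fun x _ => ?_
    by_cases hQx : Z N x ∈ cubeQ d M
    · have hone : (∑ g : Fin d → Fin m, f (cornerPt d M m g)
          * if Z N x ∈ boxSet d M m g then w N x else 0)
          = f (cornerPt d M m (classify d M m hm1 (Z N x))) * w N x := by
        rw [Finset.sum_eq_single (classify d M m hm1 (Z N x))]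
        · rw [if_pos (classify_mem hM1 hm1 hQx)]
        · intro g _ hne
          rw [if_neg fun hmem => hne ((classify_unique hM1 hm1 hmem).symm ▸ rfl),
            mul_zero]
        · intro h
          exact absurd (Finset.mem_univ _) h
      rw [hone, hφdef]
      simp only [hQx, if_true]
      ring
    · rw [hφdef]
      simp only [hQx, if_false, mul_zero]
      apply Finset.sum_eq_zero
      intro g _
      rw [if_neg fun hmem => hQx (boxSet_subset_cubeQ hM1 hm1 g hmem), mul_zero]
  -- pointwise bound
  have hφbound : ∀ x, |φ x| ≤ Cb := by
    intro x
    rw [hφdef]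
    by_cases h : Z N x ∈ cubeQ d M
    · simp only [h, if_true]; exact hfb _
    · simp only [h, if_false, abs_zero]; exact hCb0
  have hptwise : ∀ x : X N, w N x * |f (Z N x - Δ N x) - φ x|
      ≤ 2 * Cb * (if l2norm (Δ N x) ≤ δ' N then 0 else w N x)
        + Cb * (if Z N x ∈ cubeQ d M then 0 else w N x) + ε₁ * w N x := by
    intro x
    have hw := hw0 N x
    have hεw : 0 ≤ ε₁ * w N x := mul_nonneg hε₁.le hw
    by_cases hG : l2norm (Δ N x) ≤ δ' N
    · have hZD : dist (Z N x - Δ N x) (Z N x) ≤ δ' N := by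
        calc dist (Z N x - Δ N x) (Z N x) ≤ l2norm (Z N x - Δ N x - Z N x) :=
            dist_le_l2norm _ _
        _ = l2norm (Δ N x) := by
            rw [show Z N x - Δ N x - Z N x = -(Δ N x) by ring]
            unfold l2norm
            simp
        _ ≤ δ' N := hG
      by_cases hQx : Z N x ∈ cubeQ d M
      · have hYK : (Z N x - Δ N x) ∈ cubeK d M :=
          mem_cubeK_of_near hQx (le_trans hZD (by linarith))
        have hdist : dist (Z N x - Δ N x)
            (cornerPt d M m (classify d M m hm1 (Z N x))) ≤ δ₀ := by
          calc dist (Z N x - Δ N x) (cornerPt d M m (classify d M m hm1 (Z N x)))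
              ≤ dist (Z N x - Δ N x) (Z N x)
                + dist (Z N x) (cornerPt d M m (classify d M m hm1 (Z N x))) :=
                dist_triangle _ _ _
          _ ≤ δ' N + 2 * (M:ℝ) / m := by
              gcongr
              exact dist_cornerPt_le hM1 hm1 (classify_mem hM1 hm1 hQx)
          _ ≤ δ₀ / 2 + δ₀ / 2 := by gcongr
          _ = δ₀ := by ring
        have hfd : |f (Z N x - Δ N x) - φ x| ≤ ε₁ := by
          rw [hφdef]
          simp only [hQx, if_true]
          exact hosc _ hYK _ (hcgK _) hdist
        simp only [hG, if_true, hQx, mul_zero]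
        have : w N x * |f (Z N x - Δ N x) - φ x| ≤ w N x * ε₁ :=
          mul_le_mul_of_nonneg_left hfd hw
        have hcomm : w N x * ε₁ = ε₁ * w N x := mul_comm _ _
        linarith
      · have hfd : |f (Z N x - Δ N x) - φ x| ≤ Cb := by
          rw [hφdef]
          simp only [hQx, if_false, sub_zero]
          exact hfb _
        simp only [hG, if_true, hQx, if_false, mul_zero]
        have : w N x * |f (Z N x - Δ N x) - φ x| ≤ w N x * Cb :=
          mul_le_mul_of_nonneg_left hfd hw
        have hcomm : w N x * Cb = Cb * w N x := mul_comm _ _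
        linarith
    · have hfd : |f (Z N x - Δ N x) - φ x| ≤ 2 * Cb := by
        calc |f (Z N x - Δ N x) - φ x| ≤ |f (Z N x - Δ N x)| + |φ x| :=
            abs_sub _ _
        _ ≤ Cb + Cb := add_le_add (hfb _) (hφbound x)
        _ = 2 * Cb := by ring
      simp only [hG, if_false]
      have h1 : w N x * |f (Z N x - Δ N x) - φ x| ≤ 2 * Cb * w N x := by
        have := mul_le_mul_of_nonneg_left hfd hw
        have hcomm : w N x * (2 * Cb) = 2 * Cb * w N x := mul_comm _ _
        linarith
      have h2 : 0 ≤ Cb * (if Z N x ∈ cubeQ d M then 0 else w N x) := by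
        by_cases h : Z N x ∈ cubeQ d M <;> simp [h] <;> positivity
      linarith
  -- Step A
  have hAT : |(∑ x, w N x * f (Z N x - Δ N x)) - T| ≤
      2 * Cb * ρ N + Cb * (ε₁ + η N) + ε₁ := by
    rw [hTφ, ← Finset.sum_sub_distrib]
    have habs : |∑ x, (w N x * f (Z N x - Δ N x) - w N x * φ x)|
        ≤ ∑ x, w N x * |f (Z N x - Δ N x) - φ x| := by
      refine le_trans (Finset.abs_sum_le_sum_abs _ _) ?_
      refine le_of_eq (Finset.sum_congr rfl fun x _ => ?_)
      rw [← mul_sub, abs_mul, abs_of_nonneg (hw0 N x)]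
    refine le_trans habs ?_
    refine le_trans (Finset.sum_le_sum fun x _ => hptwise x) ?_
    rw [Finset.sum_add_distrib, Finset.sum_add_distrib,
      ← Finset.mul_sum, ← Finset.mul_sum, ← Finset.mul_sum]
    have e1 : (∑ x, if l2norm (Δ N x) ≤ δ' N then (0:ℝ) else w N x) ≤ ρ N := by
      have heq : (∑ x, if l2norm (Δ N x) ≤ δ' N then (0:ℝ) else w N x)
          = 1 - ∑ x, if l2norm (Δ N x) ≤ δ' N then w N x else 0 := by
        rw [eq_sub_iff_add_eq, ← Finset.sum_add_distrib, ← hw1N]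
        refine Finset.sum_congr rfl fun x _ => ?_
        by_cases h : l2norm (Δ N x) ≤ δ' N <;> simp [h]
      rw [heq]
      linarith [hGsum]
    have e2 : (∑ x, if Z N x ∈ cubeQ d M then (0:ℝ) else w N x) ≤ ε₁ + η N := by
      have heq : (∑ x, if Z N x ∈ cubeQ d M then (0:ℝ) else w N x)
          = ∑ x, if Z N x ∈ (cubeQ d M)ᶜ then w N x else 0 := by
        refine Finset.sum_congr rfl fun x _ => ?_
        by_cases h : Z N x ∈ cubeQ d M <;> simp [h]
      rw [heq]
      exact hPZQc
    rw [hw1N]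
    have t1 := mul_le_mul_of_nonneg_left e1 (by linarith : (0:ℝ) ≤ 2 * Cb)
    have t2 := mul_le_mul_of_nonneg_left e2 hCb0
    linarith
  -- Step B
  set T'' : ℝ := ∑ g : Fin d → Fin m, f (cornerPt d M m g)
      * (Φ (boxSet d M m g)).toReal with hT''def
  have hBT : |T - T''| ≤ Cb * mcard * η N := by
    rw [hTdef, hT''def, ← Finset.sum_sub_distrib]
    refine le_trans (Finset.abs_sum_le_sum_abs _ _) ?_
    have hterm : ∀ g : Fin d → Fin m,
        |f (cornerPt d M m g) * (∑ x, if Z N x ∈ boxSet d M m g then w N x else 0)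
          - f (cornerPt d M m g) * (Φ (boxSet d M m g)).toReal| ≤ Cb * η N := by
      intro g
      rw [← mul_sub, abs_mul]
      exact mul_le_mul (hfb _) (hPZconv _ (boxSet_convex g) (boxSet_measurable g))
        (abs_nonneg _) hCb0
    refine le_trans (Finset.sum_le_sum fun g _ => hterm g) ?_
    rw [Finset.sum_const, Finset.card_univ, nsmul_eq_mul, ← hmcdef]
    exact le_of_eq (by ring)
  -- Step C
  have hCT : |T'' - ∫ v in cubeQ d M, f v ∂Φ| ≤ ε₁ := by
    rw [hT''def, integral_cubeQ_sum hM1 hm1 Φ hfint, ← Finset.sum_sub_distrib]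
    refine le_trans (Finset.abs_sum_le_sum_abs _ _) ?_
    have hterm : ∀ g : Fin d → Fin m,
        |f (cornerPt d M m g) * (Φ (boxSet d M m g)).toReal
          - ∫ v in boxSet d M m g, f v ∂Φ| ≤ ε₁ * (Φ (boxSet d M m g)).toReal := by
      intro g
      rw [abs_sub_comm]
      exact hI4 g
    refine le_trans (Finset.sum_le_sum fun g _ => hterm g) ?_
    rw [← Finset.mul_sum, ← measure_cubeQ_sum hM1 hm1 Φ]
    exact mul_le_of_le_one_right hε₁.le hΦQle1
  -- total
  rw [Real.dist_eq]
  have hd1 : |(∑ x, w N x * f (Z N x - Δ N x)) - ∫ v, f v ∂Φ|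
      ≤ |(∑ x, w N x * f (Z N x - Δ N x)) - T| + |T - T''|
        + |T'' - ∫ v in cubeQ d M, f v ∂Φ| + |∫ v in (cubeQ d M)ᶜ, f v ∂Φ| := by
    have heq : (∑ x, w N x * f (Z N x - Δ N x)) - ∫ v, f v ∂Φ
        = ((∑ x, w N x * f (Z N x - Δ N x)) - T) + (T - T'')
          + (T'' - ∫ v in cubeQ d M, f v ∂Φ)
          + (- ∫ v in (cubeQ d M)ᶜ, f v ∂Φ) := by
      rw [← hIsplit]; ring
    rw [heq]
    refine le_trans (abs_add_le _ _) ?_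
    rw [abs_neg]
    gcongr
    refine le_trans (abs_add_le _ _) ?_
    gcongr
    exact abs_add_le _ _
  have hsum : |(∑ x, w N x * f (Z N x - Δ N x)) - T| + |T - T''|
        + |T'' - ∫ v in cubeQ d M, f v ∂Φ| + |∫ v in (cubeQ d M)ᶜ, f v ∂Φ|
      ≤ (2 + 2 * Cb) * ε₁ + (2 * Cb * ρ N + Cb * (mcard + 1) * η N) := by
    have hexp : (2 + 2 * Cb) * ε₁ + (2 * Cb * ρ N + Cb * (mcard + 1) * η N)
        = (2 * Cb * ρ N + Cb * (ε₁ + η N) + ε₁) + Cb * mcard * η N + ε₁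
          + Cb * ε₁ := by ring
    rw [hexp]
    have := hAT; have := hBT; have := hCT; have := hI5
    linarith
  have hε₁calc : (2 + 2 * Cb) * ε₁ = ε' / 4 := by
    rw [hε₁def]
    field_simp
    ring
  calc |(∑ x, w N x * f (Z N x - Δ N x)) - ∫ v, f v ∂Φ|
      ≤ (2 + 2 * Cb) * ε₁ + (2 * Cb * ρ N + Cb * (mcard + 1) * η N) :=
      le_trans hd1 hsum
  _ < ε' / 4 + ε' / 4 := by rw [hε₁calc]; linarith
  _ < ε' := by linarith


lemma piCongrLeft_cast_apply {n m : ℕ} (h : m = n) (v : Fin n → ℝ) (b : Fin m) :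
    (MeasurableEquiv.piCongrLeft (fun _ : Fin m => ℝ) (finCongr h).symm) v b
      = v (Fin.cast h b) := by
  have hb : b = (finCongr h).symm (finCongr h b) := by simp
  conv_lhs => rw [hb]
  rw [show ⇑(MeasurableEquiv.piCongrLeft (fun _ : Fin m => ℝ) (finCongr h).symm)
    = ⇑(Equiv.piCongrLeft (fun _ : Fin m => ℝ) (finCongr h).symm) from rfl]
  rw [Equiv.piCongrLeft_apply_apply]
  simp

lemma gauss_reindex {n m : ℕ} (h : m = n) (𝒞 : Set (Fin m → ℝ))
    (h𝒞 : MeasurableSet 𝒞) :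
    (Measure.pi fun _ : Fin n => gaussianReal 0 1)
        ((fun v : Fin n → ℝ => fun i : Fin m => v (Fin.cast h i)) ⁻¹' 𝒞)
      = (Measure.pi fun _ : Fin m => gaussianReal 0 1) 𝒞 := by
  have hmp := measurePreserving_piCongrLeft (fun _ : Fin m => gaussianReal 0 1)
    (finCongr h).symm
  have hfun : ⇑(MeasurableEquiv.piCongrLeft (fun _ : Fin m => ℝ) (finCongr h).symm)
      = (fun v : Fin n → ℝ => fun i : Fin m => v (Fin.cast h i)) := by
    funext v
    funext b
    exact piCongrLeft_cast_apply h v b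
  rw [← hfun]
  exact hmp.measure_preimage h𝒞.nullMeasurableSet

end AuxHelpers

lemma exists_unit_vec {n : ℕ} (hn : 0 < n) : ∃ v : Fin n → ℝ, ∑ i, v i ^ 2 = 1 := by
  refine ⟨fun j => if j = ⟨0, hn⟩ then 1 else 0, ?_⟩
  have : ∀ j : Fin n, (if j = ⟨0, hn⟩ then (1:ℝ) else 0) ^ 2
      = if j = ⟨0, hn⟩ then 1 else 0 := by
    intro j; split <;> norm_num
  simp_rw [this]
  rw [Finset.sum_ite_eq' Finset.univ (⟨0, hn⟩ : Fin n) (fun _ => (1:ℝ))]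
  simp

lemma rayMax_nonneg_of_rayMin_pos {n : ℕ} (hn : 0 < n)
    (F : Matrix (Fin n) (Fin n) ℝ) (h : 0 < rayMin F) : 0 ≤ rayMax F := by
  obtain ⟨v, hv⟩ := exists_unit_vec hn
  have h1 : rayMin F ≤ ∑ i, ∑ j, v i * F i j * v j :=
    real_iInf_le _ (⟨v, hv⟩ : {v : Fin n → ℝ // ∑ i, v i ^ 2 = 1}) h
  by_cases hb : BddAbove (Set.range fun v : {v : Fin n → ℝ // ∑ i, v i ^ 2 = 1} =>
      ∑ i, ∑ j, v.1 i * F i j * v.1 j)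
  · exact le_trans (by linarith) (le_ciSup hb ⟨v, hv⟩)
  · rw [rayMax, Real.iSup_of_not_bddAbove hb]

namespace LDModel
variable (M : LDModel)

lemma l2norm_self_lt {ε : ℝ} (hε : 0 < ε) : l2norm (M.θstar - M.θstar) < ε := by
  rw [sub_self]
  have : l2norm (0 : Fin (M.nP + M.nQ) → ℝ) = 0 := by
    unfold l2norm; simp
  rw [this]; exact hε

lemma nK_pos : (0:ℝ) < (M.nK : ℝ) := by exact_mod_cast M.hK1

lemma lamEpsMinW_le (ε : ℝ) (hε : 0 < ε) (h : 0 < M.lamEpsMinW ε) :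
    M.lamEpsMinW ε ≤ M.lamStarMinW := by
  have := real_iInf_le
    (fun θ : {θ : Fin (M.nP + M.nQ) → ℝ // l2norm (θ - M.θstar) < ε} =>
      rayMin (M.fisherW θ.1) / (M.nK : ℝ))
    ⟨M.θstar, M.l2norm_self_lt hε⟩ (by rwa [lamEpsMinW] at h)
  rwa [lamEpsMinW, lamStarMinW]

lemma lamEpsMinB_le (ε : ℝ) (hε : 0 < ε) (h : 0 < M.lamEpsMinB ε) :
    M.lamEpsMinB ε ≤ M.lamStarMinB := by
  have := real_iInf_le
    (fun θ : {θ : Fin (M.nP + M.nQ) → ℝ // l2norm (θ - M.θstar) < ε} =>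
      rayMin (M.fisherB θ.1) / M.KC2)
    ⟨M.θstar, M.l2norm_self_lt hε⟩ (by rwa [lamEpsMinB] at h)
  rwa [lamEpsMinB, lamStarMinB]

lemma lamStarMaxW_nonneg (ε : ℝ) (hε : 0 < ε) (h : 0 < M.lamEpsMinW ε) :
    0 ≤ M.lamStarMaxW := by
  have h1 : 0 < M.lamStarMinW := lt_of_lt_of_le h (M.lamEpsMinW_le ε hε h)
  have h2 : 0 < rayMin (M.fisherW M.θstar) := by
    rw [lamStarMinW] at h1
    have h3 := mul_pos h1 M.nK_pos
    rwa [div_mul_cancel₀ _ M.nK_pos.ne'] at h3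
  have h3 : 0 ≤ rayMax (M.fisherW M.θstar) :=
    rayMax_nonneg_of_rayMin_pos M.hp1 _ h2
  rw [lamStarMaxW]
  exact div_nonneg h3 M.nK_pos.le

lemma KC2_nonneg : (0:ℝ) ≤ M.KC2 := Nat.cast_nonneg _

lemma lamStarMaxB_nonneg (ε : ℝ) (hε : 0 < ε) (h : 0 < M.lamEpsMinB ε) :
    0 ≤ M.lamStarMaxB := by
  by_cases hK : M.KC2 = 0
  · rw [lamStarMaxB, hK, div_zero]
  · have hKpos : 0 < M.KC2 := lt_of_le_of_ne M.KC2_nonneg (Ne.symm hK)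
    have h1 : 0 < M.lamStarMinB := lt_of_lt_of_le h (M.lamEpsMinB_le ε hε h)
    have h2 : 0 < rayMin (M.fisherB M.θstar) := by
      rw [lamStarMinB] at h1
      have h3 := mul_pos h1 hKpos
      rwa [div_mul_cancel₀ _ hKpos.ne'] at h3
    have h3 : 0 ≤ rayMax (M.fisherB M.θstar) :=
      rayMax_nonneg_of_rayMin_pos M.hq1 _ h2
    rw [lamStarMaxB]
    exact div_nonneg h3 M.KC2_nonneg

lemma href_nonneg (x : M.Conf) : 0 ≤ M.href x :=
  mul_nonneg (Finset.prod_nonneg fun k _ => M.hWb_nonneg k _)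
    (Finset.prod_nonneg fun e _ => M.hBb_nonneg e _)

lemma exists_href_pos : ∃ x : M.Conf, 0 < M.href x := by
  refine ⟨⟨fun k => (M.hWb_ne k).choose, fun e => (M.hBb_ne e).choose⟩, ?_⟩
  have h1 : (∏ k, M.hWb k (M.hWb_ne k).choose) ≠ 0 :=
    Finset.prod_ne_zero_iff.mpr fun k _ => (M.hWb_ne k).choose_spec
  have h2 : (∏ e, M.hBb e (M.hBb_ne e).choose) ≠ 0 :=
    Finset.prod_ne_zero_iff.mpr fun e _ => (M.hBb_ne e).choose_spec
  have := M.href_nonneg ⟨fun k => (M.hWb_ne k).choose, fun e => (M.hBb_ne e).choose⟩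
  rw [href] at this ⊢
  exact lt_of_le_of_ne this (Ne.symm (mul_ne_zero h1 h2))

lemma prob_nonneg (θ : Fin (M.nP + M.nQ) → ℝ) (x : M.Conf) : 0 ≤ M.prob θ x :=
  mul_nonneg (M.href_nonneg x) (Real.exp_nonneg _)

lemma sum_exp_pos (θ : Fin (M.nP + M.nQ) → ℝ) :
    0 < ∑ x : M.Conf, M.href x * Real.exp (∑ i, θ i * M.svec x i) := by
  obtain ⟨x₀, hx₀⟩ := M.exists_href_pos
  refine Finset.sum_pos' (fun x _ => mul_nonneg (M.href_nonneg x) (Real.exp_nonneg _))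
    ⟨x₀, Finset.mem_univ _, mul_pos hx₀ (Real.exp_pos _)⟩

lemma sum_prob (θ : Fin (M.nP + M.nQ) → ℝ) : ∑ x : M.Conf, M.prob θ x = 1 := by
  have hS := M.sum_exp_pos θ
  unfold prob psi
  simp_rw [Real.exp_sub, Real.exp_log hS, mul_div_assoc']
  rw [← Finset.sum_div]
  rw [div_eq_one_iff_eq hS.ne']

end LDModel

lemma sqrt_term_bound {L lam a t : ℝ} (hL : 0 < L) (hlam : L ≤ lam)
    (ha : 0 ≤ a) (ht : 0 < t) :
    Real.sqrt (a / (lam ^ 3 * t)) ≤ Real.sqrt (1 / L ^ 3) * Real.sqrt (a / t) := by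
  rw [← Real.sqrt_mul (by positivity)]
  apply Real.sqrt_le_sqrt
  have h1 : 1 / L ^ 3 * (a / t) = a / (L ^ 3 * t) := by
    field_simp
  rw [h1]
  have h2 : L ^ 3 * t ≤ lam ^ 3 * t :=
    mul_le_mul_of_nonneg_right (pow_le_pow_left₀ hL.le hlam 3) ht.le
  exact div_le_div_of_nonneg_left ha (by positivity) h2

namespace LDModel

lemma Amax_nonneg (M : LDModel) : 0 ≤ M.Amax := Nat.cast_nonneg _

lemma Aavg_nonneg (M : LDModel) : 0 ≤ M.Aavg :=
  div_nonneg (Nat.cast_nonneg _) (Nat.cast_nonneg _)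

lemma eta_bound (M : LDModel) (ε L : ℝ) (hε : 0 < ε) (hL : 0 < L)
    (h2W : 0 < M.lamEpsMinW ε) (h2B : 0 < M.lamEpsMinB ε)
    (hLW : L ≤ M.lamEpsMinW ε) (hLB : L ≤ M.lamEpsMinB ε)
    (N : ℕ) (hN : 3 ≤ N) (C₁ : ℝ) (hC₁ : 0 < C₁) :
    C₁ * ((M.nP : ℝ) + (M.nQ : ℝ)) ^ ((1:ℝ)/4) * M.Amax ^ 7 *
        (Real.sqrt ((M.nP : ℝ) ^ 3 / (M.lamStarMinW ^ 3 * (N:ℝ)))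
          + Real.sqrt ((M.nQ : ℝ) ^ 3 / (M.lamStarMinB ^ 3 * (N:ℝ) ^ 2)))
      ≤ (C₁ * Real.sqrt (1 / L ^ 3)) *
        (((M.nP : ℝ) + (M.nQ : ℝ)) ^ ((1:ℝ)/4) * M.Amax ^ 7 *
          (Real.sqrt ((M.nP : ℝ) ^ 3 / (N:ℝ))
            + Real.sqrt ((M.nQ : ℝ) ^ 3 / (N:ℝ) ^ 2))) := by
  have hNpos : (0:ℝ) < (N:ℝ) := by
    have : 0 < N := by omega
    exact_mod_cast this
  have hlamW : L ≤ M.lamStarMinW := le_trans hLW (M.lamEpsMinW_le ε hε h2W)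
  have hlamB : L ≤ M.lamStarMinB := le_trans hLB (M.lamEpsMinB_le ε hε h2B)
  have hs1 := sqrt_term_bound hL hlamW (a := (M.nP:ℝ)^3) (by positivity) hNpos
  have hs2 := sqrt_term_bound hL hlamB (a := (M.nQ:ℝ)^3) (by positivity)
    (show (0:ℝ) < (N:ℝ)^2 by positivity)
  have hcoef : 0 ≤ C₁ * ((M.nP : ℝ) + (M.nQ : ℝ)) ^ ((1:ℝ)/4) * M.Amax ^ 7 := by
    have h1 : (0:ℝ) ≤ (M.nP : ℝ) + (M.nQ : ℝ) := by positivity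
    have h2 : 0 ≤ M.Amax := M.Amax_nonneg
    positivity
  calc C₁ * ((M.nP : ℝ) + (M.nQ : ℝ)) ^ ((1:ℝ)/4) * M.Amax ^ 7 *
        (Real.sqrt ((M.nP : ℝ) ^ 3 / (M.lamStarMinW ^ 3 * (N:ℝ)))
          + Real.sqrt ((M.nQ : ℝ) ^ 3 / (M.lamStarMinB ^ 3 * (N:ℝ) ^ 2)))
      ≤ C₁ * ((M.nP : ℝ) + (M.nQ : ℝ)) ^ ((1:ℝ)/4) * M.Amax ^ 7 *
        (Real.sqrt (1 / L ^ 3) * Real.sqrt ((M.nP : ℝ) ^ 3 / (N:ℝ))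
          + Real.sqrt (1 / L ^ 3) * Real.sqrt ((M.nQ : ℝ) ^ 3 / (N:ℝ) ^ 2)) :=
      mul_le_mul_of_nonneg_left (add_le_add hs1 hs2) hcoef
  _ = (C₁ * Real.sqrt (1 / L ^ 3)) *
        (((M.nP : ℝ) + (M.nQ : ℝ)) ^ ((1:ℝ)/4) * M.Amax ^ 7 *
          (Real.sqrt ((M.nP : ℝ) ^ 3 / (N:ℝ))
            + Real.sqrt ((M.nQ : ℝ) ^ 3 / (N:ℝ) ^ 2))) := by ring

lemma delta_bound (M : LDModel) (ε L U : ℝ) (hL : 0 < L)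
    (hLW : L ≤ M.lamEpsMinW ε) (hLB : L ≤ M.lamEpsMinB ε)
    (hUW : M.lamStarMaxW ≤ U) (hUB : M.lamStarMaxB ≤ U)
    (h0W : 0 ≤ M.lamStarMaxW) (h0B : 0 ≤ M.lamStarMaxB)
    (N : ℕ) (hN : 3 ≤ N) (C₂ : ℝ) (hC₂ : 0 < C₂) :
    C₂ * M.Amax ^ 6 *
        Real.sqrt (M.Aavg * M.lamStarMaxW ^ 2 / (M.lamEpsMinW ε) ^ 5
            * ((M.nP : ℝ) ^ 5 / (N:ℝ))
          + M.Aavg ^ 2 * M.lamStarMaxB ^ 2 / (M.lamEpsMinB ε) ^ 5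
            * ((M.nQ : ℝ) ^ 5 / (N:ℝ) ^ 2))
      ≤ (C₂ * Real.sqrt (U ^ 2 / L ^ 5)) * (M.Amax ^ 6 *
          Real.sqrt (M.Aavg * (M.nP : ℝ) ^ 5 / (N:ℝ)
            + M.Aavg ^ 2 * (M.nQ : ℝ) ^ 5 / (N:ℝ) ^ 2)) := by
  have hNpos : (0:ℝ) < (N:ℝ) := by
    have : 0 < N := by omega
    exact_mod_cast this
  have hA : 0 ≤ M.Aavg := M.Aavg_nonneg
  have hratioW : M.lamStarMaxW ^ 2 / (M.lamEpsMinW ε) ^ 5 ≤ U ^ 2 / L ^ 5 :=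
    div_le_div₀ (by positivity) (pow_le_pow_left₀ h0W hUW 2) (by positivity)
      (pow_le_pow_left₀ hL.le hLW 5)
  have hratioB : M.lamStarMaxB ^ 2 / (M.lamEpsMinB ε) ^ 5 ≤ U ^ 2 / L ^ 5 :=
    div_le_div₀ (by positivity) (pow_le_pow_left₀ h0B hUB 2) (by positivity)
      (pow_le_pow_left₀ hL.le hLB 5)
  have hinner : M.Aavg * M.lamStarMaxW ^ 2 / (M.lamEpsMinW ε) ^ 5
        * ((M.nP : ℝ) ^ 5 / (N:ℝ))
      + M.Aavg ^ 2 * M.lamStarMaxB ^ 2 / (M.lamEpsMinB ε) ^ 5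
        * ((M.nQ : ℝ) ^ 5 / (N:ℝ) ^ 2)
      ≤ (U ^ 2 / L ^ 5) * (M.Aavg * (M.nP : ℝ) ^ 5 / (N:ℝ)
          + M.Aavg ^ 2 * (M.nQ : ℝ) ^ 5 / (N:ℝ) ^ 2) := by
    have ht1 : (0:ℝ) ≤ M.Aavg * ((M.nP : ℝ) ^ 5 / (N:ℝ)) := by positivity
    have ht2 : (0:ℝ) ≤ M.Aavg ^ 2 * ((M.nQ : ℝ) ^ 5 / (N:ℝ) ^ 2) := by positivity
    have e1 : M.Aavg * M.lamStarMaxW ^ 2 / (M.lamEpsMinW ε) ^ 5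
          * ((M.nP : ℝ) ^ 5 / (N:ℝ))
        = (M.lamStarMaxW ^ 2 / (M.lamEpsMinW ε) ^ 5)
          * (M.Aavg * ((M.nP : ℝ) ^ 5 / (N:ℝ))) := by ring
    have e2 : M.Aavg ^ 2 * M.lamStarMaxB ^ 2 / (M.lamEpsMinB ε) ^ 5
          * ((M.nQ : ℝ) ^ 5 / (N:ℝ) ^ 2)
        = (M.lamStarMaxB ^ 2 / (M.lamEpsMinB ε) ^ 5)
          * (M.Aavg ^ 2 * ((M.nQ : ℝ) ^ 5 / (N:ℝ) ^ 2)) := by ring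
    have e3 : (U ^ 2 / L ^ 5) * (M.Aavg * (M.nP : ℝ) ^ 5 / (N:ℝ)
          + M.Aavg ^ 2 * (M.nQ : ℝ) ^ 5 / (N:ℝ) ^ 2)
        = (U ^ 2 / L ^ 5) * (M.Aavg * ((M.nP : ℝ) ^ 5 / (N:ℝ)))
          + (U ^ 2 / L ^ 5) * (M.Aavg ^ 2 * ((M.nQ : ℝ) ^ 5 / (N:ℝ) ^ 2)) := by
      ring
    rw [e1, e2, e3]
    exact add_le_add (mul_le_mul_of_nonneg_right hratioW ht1)
      (mul_le_mul_of_nonneg_right hratioB ht2)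
  have hsqrt : Real.sqrt (M.Aavg * M.lamStarMaxW ^ 2 / (M.lamEpsMinW ε) ^ 5
          * ((M.nP : ℝ) ^ 5 / (N:ℝ))
        + M.Aavg ^ 2 * M.lamStarMaxB ^ 2 / (M.lamEpsMinB ε) ^ 5
          * ((M.nQ : ℝ) ^ 5 / (N:ℝ) ^ 2))
      ≤ Real.sqrt (U ^ 2 / L ^ 5) *
        Real.sqrt (M.Aavg * (M.nP : ℝ) ^ 5 / (N:ℝ)
          + M.Aavg ^ 2 * (M.nQ : ℝ) ^ 5 / (N:ℝ) ^ 2) := by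
    rw [← Real.sqrt_mul (by positivity)]
    exact Real.sqrt_le_sqrt hinner
  calc C₂ * M.Amax ^ 6 * Real.sqrt _
      ≤ C₂ * M.Amax ^ 6 * (Real.sqrt (U ^ 2 / L ^ 5) *
          Real.sqrt (M.Aavg * (M.nP : ℝ) ^ 5 / (N:ℝ)
            + M.Aavg ^ 2 * (M.nQ : ℝ) ^ 5 / (N:ℝ) ^ 2)) :=
      mul_le_mul_of_nonneg_left hsqrt
        (mul_nonneg hC₂.le (pow_nonneg M.Amax_nonneg 6))
  _ = (C₂ * Real.sqrt (U ^ 2 / L ^ 5)) * (M.Amax ^ 6 *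
          Real.sqrt (M.Aavg * (M.nP : ℝ) ^ 5 / (N:ℝ)
            + M.Aavg ^ 2 * (M.nQ : ℝ) ^ 5 / (N:ℝ) ^ 2)) := by ring

end LDModel

/-- **Corollary 2.6: asymptotic multivariate normality of the maximum
likelihood estimator.**  For a sequence of minimal exponential-family local
dependence random graph models with fixed parameter dimensions `p, q ≥ 1`,
satisfying Assumptions 1–5 (with constants independent of `N`), with the
conclusions of Theorem 2.5 available, and such that
`max{A_max⁶·√(A_avg·p⁵/N + A_avg²·q⁵/N²),
     (p+q)^{1/4}·A_max⁷·[√(p³/N) + √(q³/N²)]} → 0`,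
the standardization `I(θ*)^{1/2}·(θ̂ − θ*)` converges in distribution to a
standard `(p+q)`-dimensional normal vector: for every symmetric PSD square
root of `I(θ*)` and every bounded continuous test function `f`,
`E_{θ*}[f(I(θ*)^{1/2}(θ̂ − θ*))] → ∫ f dΦ_{p+q}`. -/
theorem mle_asymptotic_normality
    (Mseq : ℕ → LDModel) (hMN : ∀ N, 3 ≤ N → (Mseq N).nN = N)
    (p q : ℕ) (hp : 1 ≤ p) (hq : 1 ≤ q)
    (hP : ∀ N : ℕ, (Mseq N).nP = p) (hQ : ∀ N : ℕ, (Mseq N).nQ = q)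
    (CW CB ε L U : ℝ) (hCW : 0 < CW) (hCB : 0 < CB) (hε : 0 < ε) (hL : 0 < L)
    (hmin : ∀ N, 3 ≤ N → (Mseq N).Minimal)
    (hA1 : ∀ N, 3 ≤ N → (Mseq N).Assump1 CW CB)
    (hA2 : ∀ N, 3 ≤ N → (Mseq N).Assump2 ε)
    (hA3 : Assump3 Mseq ε)
    (hA4 : ∀ N, 3 ≤ N → (Mseq N).Assump4)
    (hA5 : ∀ N, 3 ≤ N →
      L ≤ min ((Mseq N).lamEpsMinW ε) ((Mseq N).lamEpsMinB ε) ∧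
      max (Mseq N).lamStarMaxW (Mseq N).lamStarMaxB ≤ U)
    (hlim : Filter.Tendsto
      (fun N : ℕ => max
        ((Mseq N).Amax ^ 6 *
          Real.sqrt ((Mseq N).Aavg * (p : ℝ) ^ 5 / (N : ℝ)
            + (Mseq N).Aavg ^ 2 * (q : ℝ) ^ 5 / (N : ℝ) ^ 2))
        (((p + q : ℕ) : ℝ) ^ ((1 : ℝ) / 4) * (Mseq N).Amax ^ 7 *
          (Real.sqrt ((p : ℝ) ^ 3 / (N : ℝ))
            + Real.sqrt ((q : ℝ) ^ 3 / (N : ℝ) ^ 2))))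
      Filter.atTop (nhds 0))
    (θhat : ∀ N : ℕ, (Mseq N).Conf → (Fin ((Mseq N).nP + (Mseq N).nQ) → ℝ))
    (hθhat : ∀ (N : ℕ) (x : (Mseq N).Conf)
        (θh : Fin ((Mseq N).nP + (Mseq N).nQ) → ℝ),
      (∀ θ', (Mseq N).loglik θ' x ≤ (Mseq N).loglik θh x) →
      (∀ θh', (∀ θ', (Mseq N).loglik θ' x ≤ (Mseq N).loglik θh' x) → θh' = θh) →
      θhat N x = θh)
    -- the conclusions of Theorem 2.5, assumed available:
    (hT25 : ∃ C₁ : ℝ, 0 < C₁ ∧ ∃ C₂ : ℝ, 0 < C₂ ∧ ∃ N₀ : ℕ, 3 ≤ N₀ ∧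
      ∀ N : ℕ, N₀ ≤ N →
        ∃ Δ : (Mseq N).Conf → (Fin ((Mseq N).nP + (Mseq N).nQ) → ℝ),
          (∀ R : Matrix (Fin ((Mseq N).nP + (Mseq N).nQ))
                  (Fin ((Mseq N).nP + (Mseq N).nQ)) ℝ,
            R.IsSymm → R.PosSemidef →
            R * R = (Mseq N).fisherFull (Mseq N).θstar →
            ∀ 𝒞 : Set (Fin ((Mseq N).nP + (Mseq N).nQ) → ℝ),
              Convex ℝ 𝒞 → MeasurableSet 𝒞 →
              |(Mseq N).probSet (Mseq N).θstar
                  {x : (Mseq N).Conf |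
                    R.mulVec (θhat N x - (Mseq N).θstar) + Δ x ∈ 𝒞}
                - ((MeasureTheory.Measure.pi
                      fun _ : Fin ((Mseq N).nP + (Mseq N).nQ) =>
                        ProbabilityTheory.gaussianReal 0 1) 𝒞).toReal|
                ≤ C₁ * (((Mseq N).nP + (Mseq N).nQ : ℝ)) ^ ((1 : ℝ) / 4)
                    * (Mseq N).Amax ^ 7
                    * (Real.sqrt (((Mseq N).nP : ℝ) ^ 3 /
                          ((Mseq N).lamStarMinW ^ 3 * (N : ℝ)))
                      + Real.sqrt (((Mseq N).nQ : ℝ) ^ 3 /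
                          ((Mseq N).lamStarMinB ^ 3 * (N : ℝ) ^ 2)))) ∧
          (Mseq N).probSet (Mseq N).θstar
              {x : (Mseq N).Conf |
                l2norm (Δ x)
                  ≤ C₂ * (Mseq N).Amax ^ 6
                      * Real.sqrt
                          ((Mseq N).Aavg * (Mseq N).lamStarMaxW ^ 2
                              / ((Mseq N).lamEpsMinW ε) ^ 5
                              * (((Mseq N).nP : ℝ) ^ 5 / (N : ℝ))
                            + (Mseq N).Aavg ^ 2 * (Mseq N).lamStarMaxB ^ 2
                              / ((Mseq N).lamEpsMinB ε) ^ 5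
                              * (((Mseq N).nQ : ℝ) ^ 5 / (N : ℝ) ^ 2))}
            ≥ 1 - 1 / (N : ℝ) ^ 2) :
    ∀ Rseq : (N : ℕ) → Matrix (Fin ((Mseq N).nP + (Mseq N).nQ))
        (Fin ((Mseq N).nP + (Mseq N).nQ)) ℝ,
      (∀ N, 3 ≤ N → (Rseq N).IsSymm ∧ (Rseq N).PosSemidef ∧
        Rseq N * Rseq N = (Mseq N).fisherFull (Mseq N).θstar) →
      ∀ f : (Fin (p + q) → ℝ) → ℝ, Continuous f → (∃ Cb : ℝ, ∀ v, |f v| ≤ Cb) →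
        Filter.Tendsto
          (fun N : ℕ => (Mseq N).expect (Mseq N).θstar
            (fun x => f (fun i : Fin (p + q) =>
              (Rseq N).mulVec (θhat N x - (Mseq N).θstar)
                (Fin.cast
                  (show p + q = (Mseq N).nP + (Mseq N).nQ by
                    rw [hP N, hQ N]) i))))
          Filter.atTop
          (nhds (∫ v, f v ∂(MeasureTheory.Measure.pi
            fun _ : Fin (p + q) => ProbabilityTheory.gaussianReal 0 1))) := by

  intro Rseq hRseq f hfcont hfbdd
  obtain ⟨Cb, hCb⟩ := hfbdd
  obtain ⟨C₁, hC₁, C₂, hC₂, N₀, hN₀3, hT⟩ := hT25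
  classical
  have hd : ∀ N : ℕ, p + q = (Mseq N).nP + (Mseq N).nQ := fun N => by
    rw [hP N, hQ N]
  -- the Δ family from Theorem 2.5
  set Δ0 : ∀ N : ℕ, (Mseq N).Conf → (Fin ((Mseq N).nP + (Mseq N).nQ) → ℝ) :=
    fun N => if hN : N₀ ≤ N then (hT N hN).choose else fun _ _ => 0 with hΔ0def
  have hΔ0 : ∀ (N : ℕ) (hN : N₀ ≤ N), Δ0 N = (hT N hN).choose := fun N hN => by
    rw [hΔ0def]; exact dif_pos hN
  -- data for the core theorem
  set Zc : ∀ N : ℕ, (Mseq N).Conf → (Fin (p + q) → ℝ) := fun N x i =>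
    ((Rseq N).mulVec (θhat N x - (Mseq N).θstar) + Δ0 N x) (Fin.cast (hd N) i)
    with hZcdef
  set Δc : ∀ N : ℕ, (Mseq N).Conf → (Fin (p + q) → ℝ) := fun N x i =>
    Δ0 N x (Fin.cast (hd N) i) with hΔcdef
  set η : ℕ → ℝ := fun N =>
    C₁ * (((Mseq N).nP + (Mseq N).nQ : ℝ)) ^ ((1 : ℝ) / 4) * (Mseq N).Amax ^ 7
      * (Real.sqrt (((Mseq N).nP : ℝ) ^ 3
            / ((Mseq N).lamStarMinW ^ 3 * (N : ℝ)))
        + Real.sqrt (((Mseq N).nQ : ℝ) ^ 3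
            / ((Mseq N).lamStarMinB ^ 3 * (N : ℝ) ^ 2))) with hηdef
  set δ' : ℕ → ℝ := fun N =>
    C₂ * (Mseq N).Amax ^ 6 * Real.sqrt
      ((Mseq N).Aavg * (Mseq N).lamStarMaxW ^ 2 / ((Mseq N).lamEpsMinW ε) ^ 5
          * (((Mseq N).nP : ℝ) ^ 5 / (N : ℝ))
        + (Mseq N).Aavg ^ 2 * (Mseq N).lamStarMaxB ^ 2
          / ((Mseq N).lamEpsMinB ε) ^ 5
          * (((Mseq N).nQ : ℝ) ^ 5 / (N : ℝ) ^ 2)) with hδ'def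
  set ρ : ℕ → ℝ := fun N => 1 / (N : ℝ) ^ 2 with hρdef
  -- limits of the error sequences
  have hT1lim : Filter.Tendsto (fun N : ℕ => (Mseq N).Amax ^ 6 *
      Real.sqrt ((Mseq N).Aavg * (p : ℝ) ^ 5 / (N : ℝ)
        + (Mseq N).Aavg ^ 2 * (q : ℝ) ^ 5 / (N : ℝ) ^ 2))
      Filter.atTop (nhds 0) := by
    refine squeeze_zero (fun N => ?_) (fun N => le_max_left _ _) hlim
    exact mul_nonneg (pow_nonneg (Mseq N).Amax_nonneg 6) (Real.sqrt_nonneg _)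
  have hT2lim : Filter.Tendsto (fun N : ℕ => ((p + q : ℕ) : ℝ) ^ ((1 : ℝ) / 4)
      * (Mseq N).Amax ^ 7 * (Real.sqrt ((p : ℝ) ^ 3 / (N : ℝ))
        + Real.sqrt ((q : ℝ) ^ 3 / (N : ℝ) ^ 2)))
      Filter.atTop (nhds 0) := by
    refine squeeze_zero (fun N => ?_) (fun N => le_max_right _ _) hlim
    refine mul_nonneg (mul_nonneg (Real.rpow_nonneg (Nat.cast_nonneg _) _)
      (pow_nonneg (Mseq N).Amax_nonneg 7)) ?_
    exact add_nonneg (Real.sqrt_nonneg _) (Real.sqrt_nonneg _)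
  have hηnn : ∀ N, 0 ≤ η N := by
    intro N
    rw [hηdef]
    refine mul_nonneg (mul_nonneg (mul_nonneg hC₁.le
      (Real.rpow_nonneg (by positivity) _)) (pow_nonneg (Mseq N).Amax_nonneg 7)) ?_
    exact add_nonneg (Real.sqrt_nonneg _) (Real.sqrt_nonneg _)
  have hηub : ∀ᶠ N in Filter.atTop, η N ≤ (C₁ * Real.sqrt (1 / L ^ 3)) *
      (((p + q : ℕ) : ℝ) ^ ((1 : ℝ) / 4) * (Mseq N).Amax ^ 7 *
        (Real.sqrt ((p : ℝ) ^ 3 / (N : ℝ))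
          + Real.sqrt ((q : ℝ) ^ 3 / (N : ℝ) ^ 2))) := by
    rw [Filter.eventually_atTop]
    refine ⟨3, fun N h3 => ?_⟩
    have hA2N := hA2 N h3
    have hA5N := hA5 N h3
    have hb := (Mseq N).eta_bound ε L hε hL hA2N.1 hA2N.2
      (le_trans hA5N.1 (min_le_left _ _))
      (le_trans hA5N.1 (min_le_right _ _)) N h3 C₁ hC₁
    rw [hP N, hQ N] at hb
    have hηN : η N = C₁ * ((p : ℝ) + (q : ℝ)) ^ ((1 : ℝ) / 4)
        * (Mseq N).Amax ^ 7
        * (Real.sqrt ((p : ℝ) ^ 3 / ((Mseq N).lamStarMinW ^ 3 * (N : ℝ)))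
          + Real.sqrt ((q : ℝ) ^ 3
              / ((Mseq N).lamStarMinB ^ 3 * (N : ℝ) ^ 2))) := by
      simp only [hηdef, hP, hQ]
    rw [hηN, Nat.cast_add]
    exact hb
  have hηlim : Filter.Tendsto η Filter.atTop (nhds 0) := by
    refine squeeze_zero' (Filter.Eventually.of_forall hηnn) hηub ?_
    have := hT2lim.const_mul (C₁ * Real.sqrt (1 / L ^ 3))
    simpa using this
  have hδ'nn : ∀ N, 0 ≤ δ' N := by
    intro N
    rw [hδ'def]
    exact mul_nonneg (mul_nonneg hC₂.le (pow_nonneg (Mseq N).Amax_nonneg 6))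
      (Real.sqrt_nonneg _)
  have hδ'ub : ∀ᶠ N in Filter.atTop, δ' N ≤ (C₂ * Real.sqrt (U ^ 2 / L ^ 5)) *
      ((Mseq N).Amax ^ 6 * Real.sqrt ((Mseq N).Aavg * (p : ℝ) ^ 5 / (N : ℝ)
        + (Mseq N).Aavg ^ 2 * (q : ℝ) ^ 5 / (N : ℝ) ^ 2)) := by
    rw [Filter.eventually_atTop]
    refine ⟨3, fun N h3 => ?_⟩
    have hA2N := hA2 N h3
    have hA5N := hA5 N h3
    have hb := (Mseq N).delta_bound ε L U hL
      (le_trans hA5N.1 (min_le_left _ _))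
      (le_trans hA5N.1 (min_le_right _ _))
      (le_trans (le_max_left _ _) hA5N.2)
      (le_trans (le_max_right _ _) hA5N.2)
      ((Mseq N).lamStarMaxW_nonneg ε hε hA2N.1)
      ((Mseq N).lamStarMaxB_nonneg ε hε hA2N.2) N h3 C₂ hC₂
    rw [hP N, hQ N] at hb
    have hδN : δ' N = C₂ * (Mseq N).Amax ^ 6 * Real.sqrt
        ((Mseq N).Aavg * (Mseq N).lamStarMaxW ^ 2 / ((Mseq N).lamEpsMinW ε) ^ 5
            * ((p : ℝ) ^ 5 / (N : ℝ))
          + (Mseq N).Aavg ^ 2 * (Mseq N).lamStarMaxB ^ 2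
            / ((Mseq N).lamEpsMinB ε) ^ 5
            * ((q : ℝ) ^ 5 / (N : ℝ) ^ 2)) := by
      simp only [hδ'def, hP, hQ]
    rw [hδN]
    exact hb
  have hδ'lim : Filter.Tendsto δ' Filter.atTop (nhds 0) := by
    refine squeeze_zero' (Filter.Eventually.of_forall hδ'nn) hδ'ub ?_
    have := hT1lim.const_mul (C₂ * Real.sqrt (U ^ 2 / L ^ 5))
    simpa using this
  have hρlim : Filter.Tendsto ρ Filter.atTop (nhds 0) := by
    have h1 := tendsto_one_div_atTop_nhds_zero_nat (𝕜 := ℝ)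
    have h2 := h1.mul h1
    rw [mul_zero] at h2
    refine Filter.Tendsto.congr (fun N => ?_) h2
    rw [hρdef]
    ring
  -- eventual convex-set bound
  have hconvev : ∀ᶠ N in Filter.atTop, ∀ 𝒞 : Set (Fin (p + q) → ℝ),
      Convex ℝ 𝒞 → MeasurableSet 𝒞 →
      |(∑ x, Set.indicator {y : (Mseq N).Conf | Zc N y ∈ 𝒞}
          ((Mseq N).prob (Mseq N).θstar) x)
        - (((Measure.pi fun _ : Fin (p + q) => gaussianReal 0 1) 𝒞)).toReal|
        ≤ η N := by
    rw [Filter.eventually_atTop]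
    refine ⟨max N₀ 3, fun N hN => ?_⟩
    have hN0 : N₀ ≤ N := le_trans (le_max_left _ _) hN
    have h3 : 3 ≤ N := le_trans (le_max_right _ _) hN
    intro 𝒞 hc hm
    obtain ⟨hsym, hpsd, hsq⟩ := hRseq N h3
    set 𝒞' : Set (Fin ((Mseq N).nP + (Mseq N).nQ) → ℝ) :=
      (fun v : Fin ((Mseq N).nP + (Mseq N).nQ) → ℝ =>
        fun i : Fin (p + q) => v (Fin.cast (hd N) i)) ⁻¹' 𝒞 with h𝒞'def
    have hc' : Convex ℝ 𝒞' :=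
      hc.linear_preimage (LinearMap.funLeft ℝ ℝ (Fin.cast (hd N)))
    have hm' : MeasurableSet 𝒞' :=
      hm.preimage (measurable_pi_lambda _ fun i => measurable_pi_apply _)
    have hkey := ((hT N hN0).choose_spec.1) (Rseq N) hsym hpsd hsq 𝒞' hc' hm'
    have hset : {x : (Mseq N).Conf |
        (Rseq N).mulVec (θhat N x - (Mseq N).θstar) + (hT N hN0).choose x ∈ 𝒞'}
        = {y : (Mseq N).Conf | Zc N y ∈ 𝒞} := by
      ext x
      rw [hZcdef, ← hΔ0 N hN0]
      exact Iff.rfl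
    have hmeq : ((Measure.pi fun _ : Fin ((Mseq N).nP + (Mseq N).nQ) =>
          gaussianReal 0 1) 𝒞').toReal
        = (((Measure.pi fun _ : Fin (p + q) => gaussianReal 0 1) 𝒞)).toReal := by
      rw [h𝒞'def]
      exact congrArg ENNReal.toReal (gauss_reindex (hd N) 𝒞 hm)
    rw [hset, hmeq] at hkey
    rw [hηdef]
    exact hkey
  -- eventual Δ bound
  have hΔev : ∀ᶠ N in Filter.atTop, 1 - ρ N ≤
      ∑ x, Set.indicator {y : (Mseq N).Conf | l2norm (Δc N y) ≤ δ' N}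
        ((Mseq N).prob (Mseq N).θstar) x := by
    rw [Filter.eventually_atTop]
    refine ⟨max N₀ 3, fun N hN => ?_⟩
    have hN0 : N₀ ≤ N := le_trans (le_max_left _ _) hN
    have hkey := (hT N hN0).choose_spec.2
    have hset : {x : (Mseq N).Conf | l2norm ((hT N hN0).choose x)
          ≤ C₂ * (Mseq N).Amax ^ 6 * Real.sqrt
            ((Mseq N).Aavg * (Mseq N).lamStarMaxW ^ 2
                / ((Mseq N).lamEpsMinW ε) ^ 5
                * (((Mseq N).nP : ℝ) ^ 5 / (N : ℝ))
              + (Mseq N).Aavg ^ 2 * (Mseq N).lamStarMaxB ^ 2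
                / ((Mseq N).lamEpsMinB ε) ^ 5
                * (((Mseq N).nQ : ℝ) ^ 5 / (N : ℝ) ^ 2))}
        = {y : (Mseq N).Conf | l2norm (Δc N y) ≤ δ' N} := by
      ext x
      rw [hδ'def]
      simp only [Set.mem_setOf_eq]
      simp only [hΔcdef]
      rw [← hΔ0 N hN0]
      rw [l2norm_reindex (hd N) (Δ0 N x)]
    rw [hset] at hkey
    rw [hρdef]
    exact hkey
  -- apply the core theorem
  have hcore := core_weak (p + q) f hfcont Cb hCb
    (fun N => (Mseq N).Conf) (fun N => (Mseq N).prob (Mseq N).θstar) Zc Δc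
    η δ' ρ hηlim hδ'lim hρlim
    (fun N x => (Mseq N).prob_nonneg _ x)
    (Filter.Eventually.of_forall fun N => (Mseq N).sum_prob _)
    hconvev hΔev
  refine Filter.Tendsto.congr (fun N => ?_) hcore
  unfold LDModel.expect
  refine Finset.sum_congr rfl fun x _ => ?_
  dsimp only
  have harg : Zc N x - Δc N x
      = fun i : Fin (p + q) => (Rseq N).mulVec (θhat N x - (Mseq N).θstar)
          (Fin.cast (hd N) i) := by
    funext i
    rw [Pi.sub_apply]
    simp only [hZcdef, hΔcdef]
    rw [Pi.add_apply]
    ring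
  rw [harg]
end
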